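/- arXiv:2504.17458 — 7 statements merged into one kernel-verified Lean document; each statement's English description precedes it below -/
import Mathlib

section
/- Let H be a monotone (subgraph-closed) class of host graphs and G a guest class. If there is a constant s with c_g(G,J) ≤ s for every graph J that lies both in the union-closure of G and in H, then c_g(G,H') ≤ s·c_u(G,H') for every H' ∈ H. In particular H is (c_g, c_u)-bounded. -/
open SimpleGraph

/-- A class of simple graphs on arbitrary (small) vertex types. -/
def GraphClass : Type 1 := ∀ (V : Type), SimpleGraph V → Prop

/-- The class contains the graph `K₂`. -/
def GraphClass.ContainsK2 (𝒢 : GraphClass) : Prop := 𝒢 (Fin 2) ⊤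

/-- Hereditary: closed under induced subgraphs. -/
def GraphClass.Hereditary (𝒢 : GraphClass) : Prop :=
  ∀ (V : Type) (G : SimpleGraph V), 𝒢 V G → ∀ s : Set V, 𝒢 s (G.induce s)

/-- Monotone: closed under (not necessarily spanning) subgraphs. -/
def GraphClass.MonotoneClass (𝒢 : GraphClass) : Prop :=
  ∀ (V : Type) (G : SimpleGraph V), 𝒢 V G →
    ∀ (s : Set V) (G' : SimpleGraph s), G' ≤ G.induce s → 𝒢 s G'

/-- Component-closed: every connected component of a member is a member. -/
def GraphClass.ComponentClosed (𝒢 : GraphClass) : Prop :=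
  ∀ (V : Type) (G : SimpleGraph V), 𝒢 V G →
    ∀ c : G.ConnectedComponent, 𝒢 c.supp (G.induce c.supp)

/-- The vertex-disjoint union of a family of graphs. -/
def disjUnionGraph {ι : Type} {W : ι → Type} (G : ∀ i, SimpleGraph (W i)) :
    SimpleGraph (Σ i, W i) :=
  SimpleGraph.fromRel (fun p q => ∃ h : p.1 = q.1, (G q.1).Adj (h ▸ p.2) q.2)

/-- Union-closed: closed under finite vertex-disjoint unions. -/
def GraphClass.UnionClosed (𝒢 : GraphClass) : Prop :=
  ∀ (ι : Type), Finite ι → ∀ (W : ι → Type) (G : ∀ i, SimpleGraph (W i)),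
    (∀ i, 𝒢 (W i) (G i)) → 𝒢 _ (disjUnionGraph G)

/-- The union-closure of a class: all graphs isomorphic to a finite
vertex-disjoint union of members of the class. -/
def GraphClass.unionClosure (𝒢 : GraphClass) : GraphClass :=
  fun V G => ∃ (ι : Type) (_ : Finite ι) (W : ι → Type) (Gs : ∀ i, SimpleGraph (W i)),
    (∀ i, 𝒢 (W i) (Gs i)) ∧ Nonempty (G ≃g disjUnionGraph Gs)

/-- A `𝒢`-cover of a host graph `H`: a finite family of finite guest graphs together
with homomorphisms to `H` such that every edge of `H` is hit. -/
structure GraphCover {V : Type} (H : SimpleGraph V) : Type 1 where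
  ι : Type
  finι : Finite ι
  W : ι → Type
  finW : ∀ i, Finite (W i)
  G : ∀ i, SimpleGraph (W i)
  φ : ∀ i, G i →g H
  edge_surj : ∀ ⦃u v : V⦄, H.Adj u v → ∃ i, ∃ a b, (G i).Adj a b ∧ φ i a = u ∧ φ i b = v

namespace GraphCover

variable {V : Type} {H : SimpleGraph V}

/-- All guests belong to the class `𝒢`. -/
def InClass (c : GraphCover H) (𝒢 : GraphClass) : Prop := ∀ i, 𝒢 (c.W i) (c.G i)

/-- The cover is injective on each guest. -/
def Injective (c : GraphCover H) : Prop := ∀ i, Function.Injective (c.φ i)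

/-- The total number of preimages of a vertex `v` of the host. -/
noncomputable def mult (c : GraphCover H) (v : V) : ℕ :=
  Nat.card {p : Σ i, c.W i // c.φ p.1 p.2 = v}

/-- `s`-local: every host vertex has at most `s` preimages. -/
def IsLocal (c : GraphCover H) (s : ℕ) : Prop := ∀ v, c.mult v ≤ s

/-- `t`-global: at most `t` guests are used. -/
def IsGlobal (c : GraphCover H) (t : ℕ) : Prop := Nat.card c.ι ≤ t

/-- The guests can be grouped into `t` groups of pairwise vertex-disjoint guests,
i.e. the cover uses at most `t` members of the union-closure of the class. -/
def IsUnion (c : GraphCover H) (t : ℕ) : Prop :=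
  ∃ f : c.ι → Fin t, ∀ i j, i ≠ j → f i = f j →
    Disjoint (Set.range (c.φ i)) (Set.range (c.φ j))

end GraphCover

/-- The global `𝒢`-covering number. -/
noncomputable def globalCN (𝒢 : GraphClass) {V : Type} (H : SimpleGraph V) : ℕ :=
  sInf {t | ∃ c : GraphCover H, c.InClass 𝒢 ∧ c.Injective ∧ c.IsGlobal t}

/-- The union `𝒢`-covering number. -/
noncomputable def unionCN (𝒢 : GraphClass) {V : Type} (H : SimpleGraph V) : ℕ :=
  sInf {t | ∃ c : GraphCover H, c.InClass 𝒢 ∧ c.Injective ∧ c.IsUnion t}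

/-- The local `𝒢`-covering number. -/
noncomputable def localCN (𝒢 : GraphClass) {V : Type} (H : SimpleGraph V) : ℕ :=
  sInf {s | ∃ c : GraphCover H, c.InClass 𝒢 ∧ c.Injective ∧ c.IsLocal s}

/-- The folded `𝒢`-covering number. -/
noncomputable def foldedCN (𝒢 : GraphClass) {V : Type} (H : SimpleGraph V) : ℕ :=
  sInf {s | ∃ c : GraphCover H, c.InClass 𝒢 ∧ c.IsLocal s}

/-- `H` has treewidth at most `w`, via tree-decompositions. -/
def TreewidthLE {V : Type} (H : SimpleGraph V) (w : ℕ) : Prop :=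
  ∃ (ι : Type) (T : SimpleGraph ι) (bag : ι → Set V),
    T.Connected ∧ T.IsAcyclic ∧
    (∀ v, ∃ i, v ∈ bag i) ∧
    (∀ ⦃u v⦄, H.Adj u v → ∃ i, u ∈ bag i ∧ v ∈ bag i) ∧
    (∀ v, (T.induce {i | v ∈ bag i}).Connected) ∧
    (∀ i, Nat.card (bag i) ≤ w + 1)

/-- `G` has maximum average degree at most `d`. -/
def madLE {V : Type} (G : SimpleGraph V) (d : ℚ) : Prop :=
  ∀ s : Set V, s.Nonempty → (2 * Nat.card (G.induce s).edgeSet : ℚ) ≤ d * Nat.card s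

/-- A star forest: an acyclic graph with no path on four vertices, i.e. every
connected component is a star. -/
def IsStarForest {V : Type} (F : SimpleGraph V) : Prop :=
  F.IsAcyclic ∧ ∀ a b c d, F.Adj a b → F.Adj b c → F.Adj c d → a = c ∨ b = d

/-- `F` is a weak induced subgraph of `H`: a subgraph each of whose connected
components is an induced subgraph of `H`. -/
def IsWeakInduced {V : Type} (F H : SimpleGraph V) : Prop :=
  F ≤ H ∧ ∀ u v, F.Reachable u v → H.Adj u v → F.Adj u v

/-- No induced cycle of length at least 4. -/
def IsChordal {V : Type} (G : SimpleGraph V) : Prop :=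
  ∀ (n : ℕ), 4 ≤ n → ∀ s : Set V, ¬ Nonempty ((G.induce s) ≃g SimpleGraph.cycleGraph n)

/-- The intersection graph of a family of sets. -/
def intersectionGraph {ι V : Type} (S : ι → Set V) : SimpleGraph ι :=
  SimpleGraph.fromRel (fun i j => (S i ∩ S j).Nonempty)

/-- The shift graph of a directed graph `D`: vertices are the directed edges,
and `uv` is adjacent to `xy` iff `v = x` (or symmetrically `y = u`). -/
def shiftGraph {V : Type} (D : V → V → Prop) : SimpleGraph {p : V × V // D p.1 p.2} :=
  SimpleGraph.fromRel (fun e f => e.val.2 = f.val.1)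

/-!
Take an optimal union cover of `H` and merge the guests of each of its `c_u(𝒢, H)` groups into
their disjoint union. Each merged guest embeds into `H`, so by monotonicity a copy of it lies
in `ℋ`; it also lies in the union-closure of `𝒢`, hence has a global cover by at most `s` guests.
Composing these covers with the embeddings covers `H` by at most `s · c_u(𝒢, H)` guests.
-/

section DisjUnion

variable {ι : Type} {W : ι → Type} {Gs : ∀ i, SimpleGraph (W i)}

theorem disjUnionGraph_adj {p q : Σ i, W i} :
    (disjUnionGraph Gs).Adj p q ↔ ∃ h : p.1 = q.1, (Gs q.1).Adj (h ▸ p.2) q.2 := by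
  have hsymm : ∀ p q : Σ i, W i, (∃ h : p.1 = q.1, (Gs q.1).Adj (h ▸ p.2) q.2) →
      ∃ h : q.1 = p.1, (Gs p.1).Adj (h ▸ q.2) p.2 := by
    rintro ⟨i, a⟩ ⟨j, b⟩ ⟨hij : i = j, h⟩
    subst hij
    exact ⟨rfl, h.symm⟩
  rw [disjUnionGraph, SimpleGraph.fromRel_adj]
  constructor
  · rintro ⟨-, h | h⟩
    exacts [h, hsymm q p h]
  · intro h
    refine ⟨?_, Or.inl h⟩
    rintro rfl
    obtain ⟨_, h⟩ := h
    exact h.ne rfl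

theorem disjUnionGraph_adj_mk {i : ι} {a b : W i} :
    (disjUnionGraph Gs).Adj ⟨i, a⟩ ⟨i, b⟩ ↔ (Gs i).Adj a b := by
  simp [disjUnionGraph_adj]

variable {V : Type} {H : SimpleGraph V}

def disjUnionGraph.lift (φ : ∀ i, Gs i →g H) : disjUnionGraph Gs →g H where
  toFun p := φ p.1 p.2
  map_rel' := by
    rintro ⟨i, a⟩ ⟨j, b⟩ h
    obtain ⟨hij : i = j, h⟩ := disjUnionGraph_adj.mp h
    subst hij
    exact (φ i).map_rel h

theorem disjUnionGraph.lift_injective {φ : ∀ i, Gs i →g H} (hφ : ∀ i, Function.Injective (φ i))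
    (hdisj : Pairwise fun i j => Disjoint (Set.range (φ i)) (Set.range (φ j))) :
    Function.Injective (disjUnionGraph.lift φ) := by
  rintro ⟨i, a⟩ ⟨j, b⟩ hab
  obtain rfl | hij := eq_or_ne i j
  · exact congrArg _ (hφ i hab)
  · exact absurd (hdisj hij) (Set.not_disjoint_iff.mpr ⟨_, ⟨a, rfl⟩, ⟨b, hab.symm⟩⟩)

end DisjUnion

namespace GraphCover

variable {V : Type} {H : SimpleGraph V}

def ofDisjUnion {ι : Type} [Finite ι] {W : ι → Type} [∀ i, Finite (W i)]
    (Gs : ∀ i, SimpleGraph (W i)) : GraphCover (disjUnionGraph Gs) where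
  ι := ι
  finι := inferInstance
  W := W
  finW := inferInstance
  G := Gs
  φ i := ⟨Sigma.mk i, disjUnionGraph_adj_mk.mpr⟩
  edge_surj := by
    rintro ⟨i, a⟩ ⟨j, b⟩ h
    obtain ⟨hij : i = j, h⟩ := disjUnionGraph_adj.mp h
    subst hij
    exact ⟨i, a, b, h, rfl, rfl⟩

theorem injective_ofDisjUnion {ι : Type} [Finite ι] {W : ι → Type} [∀ i, Finite (W i)]
    (Gs : ∀ i, SimpleGraph (W i)) : (ofDisjUnion Gs).Injective :=
  fun _ => sigma_mk_injective

def mapIso {V' : Type} {H' : SimpleGraph V'} (c : GraphCover H) (e : H ≃g H') :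
    GraphCover H' where
  ι := c.ι
  finι := c.finι
  W := c.W
  finW := c.finW
  G := c.G
  φ i := e.toHom.comp (c.φ i)
  edge_surj u v huv := by
    obtain ⟨i, a, b, hab, ha, hb⟩ := c.edge_surj (e.symm.map_adj_iff.mpr huv)
    exact ⟨i, a, b, hab, by simp [ha], by simp [hb]⟩

variable {𝒢 : GraphClass}

theorem InClass.mapIso {V' : Type} {H' : SimpleGraph V'} {c : GraphCover H} (hc : c.InClass 𝒢)
    (e : H ≃g H') : (c.mapIso e).InClass 𝒢 :=
  hc

theorem Injective.mapIso {V' : Type} {H' : SimpleGraph V'} {c : GraphCover H} (hc : c.Injective)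
    (e : H ≃g H') : (c.mapIso e).Injective :=
  fun i => e.injective.comp (hc i)

theorem IsGlobal.mapIso {V' : Type} {H' : SimpleGraph V'} {c : GraphCover H} {t : ℕ}
    (hc : c.IsGlobal t) (e : H ≃g H') : (c.mapIso e).IsGlobal t :=
  hc

def bind (e : GraphCover H) (d : ∀ i, GraphCover (e.G i)) : GraphCover H where
  ι := Σ i, (d i).ι
  finι := by
    have := e.finι
    have := fun i => (d i).finι
    infer_instance
  W p := (d p.1).W p.2
  finW p := (d p.1).finW p.2
  G p := (d p.1).G p.2
  φ p := (e.φ p.1).comp ((d p.1).φ p.2)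
  edge_surj u v huv := by
    obtain ⟨i, a, b, hab, rfl, rfl⟩ := e.edge_surj huv
    obtain ⟨j, x, y, hxy, rfl, rfl⟩ := (d i).edge_surj hab
    exact ⟨⟨i, j⟩, x, y, hxy, rfl, rfl⟩

variable {e : GraphCover H} {d : ∀ i, GraphCover (e.G i)}

theorem InClass.bind (hd : ∀ i, (d i).InClass 𝒢) : (e.bind d).InClass 𝒢 :=
  fun p => hd p.1 p.2

theorem Injective.bind (he : e.Injective) (hd : ∀ i, (d i).Injective) : (e.bind d).Injective :=
  fun p => (he p.1).comp (hd p.1 p.2)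

theorem IsGlobal.bind {s t : ℕ} (he : e.IsGlobal t) (hd : ∀ i, (d i).IsGlobal s) :
    (e.bind d).IsGlobal (s * t) := by
  have := e.finι
  have := fun i => (d i).finι
  have := Fintype.ofFinite e.ι
  calc Nat.card (Σ i, (d i).ι) = ∑ i, Nat.card (d i).ι := Nat.card_sigma
    _ ≤ ∑ _ : e.ι, s := Finset.sum_le_sum fun i _ => hd i
    _ = s * Nat.card e.ι := by simp [mul_comm]
    _ ≤ s * t := Nat.mul_le_mul_left s he

def merge (c : GraphCover H) {t : ℕ} (f : c.ι → Fin t) : GraphCover H where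
  ι := Fin t
  finι := inferInstance
  W k := Σ i : {i // f i = k}, c.W i
  finW k := by
    have := c.finι
    have := c.finW
    infer_instance
  G k := disjUnionGraph fun i : {i // f i = k} => c.G i
  φ k := disjUnionGraph.lift fun i => c.φ i
  edge_surj u v huv := by
    obtain ⟨i, a, b, hab, rfl, rfl⟩ := c.edge_surj huv
    exact ⟨f i, ⟨⟨i, rfl⟩, a⟩, ⟨⟨i, rfl⟩, b⟩, disjUnionGraph_adj_mk.mpr hab, rfl, rfl⟩

theorem isGlobal_merge (c : GraphCover H) {t : ℕ} (f : c.ι → Fin t) : (c.merge f).IsGlobal t :=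
  (Nat.card_eq_fintype_card.trans (Fintype.card_fin t)).le

theorem Injective.merge {c : GraphCover H} (hc : c.Injective) {t : ℕ} {f : c.ι → Fin t}
    (hf : ∀ i j, i ≠ j → f i = f j → Disjoint (Set.range (c.φ i)) (Set.range (c.φ j))) :
    (c.merge f).Injective := fun _ =>
  disjUnionGraph.lift_injective (fun i => hc i)
    fun i j hij => hf i j (Subtype.coe_ne_coe.mpr hij) (i.2.trans j.2.symm)

theorem isUnion_card (c : GraphCover H) : c.IsUnion (Nat.card c.ι) := by
  have := c.finι
  exact ⟨Finite.equivFin c.ι, fun i j hij hf => absurd ((Finite.equivFin c.ι).injective hf) hij⟩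

end GraphCover

section CoveringNumbers

variable {𝒢 : GraphClass} {V : Type} {H : SimpleGraph V}

theorem exists_isGlobal_of_globalCN_le (hc : ∃ c : GraphCover H, c.InClass 𝒢 ∧ c.Injective)
    {s : ℕ} (hs : globalCN 𝒢 H ≤ s) :
    ∃ c : GraphCover H, c.InClass 𝒢 ∧ c.Injective ∧ c.IsGlobal s := by
  obtain ⟨c, hc𝒢, hcinj⟩ := hc
  obtain ⟨c', hc'𝒢, hc'inj, hc'⟩ :=
    Nat.sInf_mem (s := {t | ∃ c : GraphCover H, c.InClass 𝒢 ∧ c.Injective ∧ c.IsGlobal t})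
      ⟨_, c, hc𝒢, hcinj, le_rfl⟩
  exact ⟨c', hc'𝒢, hc'inj, hc'.trans hs⟩

theorem exists_isUnion_unionCN (hc : ∃ c : GraphCover H, c.InClass 𝒢 ∧ c.Injective) :
    ∃ c : GraphCover H, c.InClass 𝒢 ∧ c.Injective ∧ c.IsUnion (unionCN 𝒢 H) := by
  obtain ⟨c, hc𝒢, hcinj⟩ := hc
  exact Nat.sInf_mem (s := {t | ∃ c : GraphCover H, c.InClass 𝒢 ∧ c.Injective ∧ c.IsUnion t})
    ⟨_, c, hc𝒢, hcinj, c.isUnion_card⟩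

theorem globalCN_eq_zero_of_not_exists
    (hc : ¬ ∃ c : GraphCover H, c.InClass 𝒢 ∧ c.Injective) : globalCN 𝒢 H = 0 := by
  refine Nat.sInf_eq_zero.mpr (Or.inr (Set.eq_empty_of_forall_notMem ?_))
  rintro t ⟨c, hc𝒢, hcinj, -⟩
  exact hc ⟨c, hc𝒢, hcinj⟩

end CoveringNumbers

theorem GraphClass.MonotoneClass.exists_iso_of_injective {ℋ : GraphClass}
    (hmon : ℋ.MonotoneClass) {V : Type} {H : SimpleGraph V} (hH : ℋ V H) {U : Type}
    {K : SimpleGraph U} (ψ : K →g H) (hψ : Function.Injective ψ) :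
    ∃ (S : Set V) (J : SimpleGraph S), ℋ S J ∧ Nonempty (J ≃g K) := by
  let e := Equiv.ofInjective ψ hψ
  refine ⟨_, K.map e.toEmbedding, hmon V H hH _ _ ?_, ⟨(SimpleGraph.Iso.map e K).symm⟩⟩
  rintro _ _ ⟨-, a, b, hab, rfl, rfl⟩
  exact ψ.map_rel hab

theorem exists_isGlobal_of_injective_hom {𝒢 ℋ : GraphClass} (hmon : ℋ.MonotoneClass) {s : ℕ}
    (hs : ∀ (V : Type) [Fintype V] (J : SimpleGraph V),
      𝒢.unionClosure V J → ℋ V J → globalCN 𝒢 J ≤ s)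
    {V : Type} {H : SimpleGraph V} (hH : ℋ V H) {ι : Type} [Finite ι] {W : ι → Type}
    [∀ i, Finite (W i)] {Gs : ∀ i, SimpleGraph (W i)} (hGs : ∀ i, 𝒢 (W i) (Gs i))
    (ψ : disjUnionGraph Gs →g H) (hψ : Function.Injective ψ) :
    ∃ d : GraphCover (disjUnionGraph Gs), d.InClass 𝒢 ∧ d.Injective ∧ d.IsGlobal s := by
  obtain ⟨S, J, hJ, ⟨e⟩⟩ := hmon.exists_iso_of_injective hH ψ hψ
  have : Finite S := Finite.of_equiv _ e.symm.toEquiv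
  have : Fintype S := Fintype.ofFinite S
  obtain ⟨d, hd𝒢, hdinj, hd⟩ := exists_isGlobal_of_globalCN_le
    ⟨(GraphCover.ofDisjUnion Gs).mapIso e.symm, hGs, (GraphCover.injective_ofDisjUnion Gs).mapIso _⟩
    (hs S J ⟨ι, inferInstance, W, Gs, hGs, ⟨e⟩⟩ hJ)
  exact ⟨d.mapIso e, hd𝒢.mapIso e, hdinj.mapIso e, hd.mapIso e⟩

/-- if `ℋ` is monotone and `c_g(𝒢, J) ≤ s` for every `J` in the
union-closure of `𝒢` that lies in `ℋ`, then `c_g(𝒢,H) ≤ s · c_u(𝒢,H)` for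
every `H ∈ ℋ`; in particular `ℋ` is `(c_g, c_u)`-bounded. -/
theorem global_le_mul_union_of_monotone (𝒢 ℋ : GraphClass) (hmon : ℋ.MonotoneClass)
    (s : ℕ)
    (hs : ∀ (V : Type) [Fintype V] (J : SimpleGraph V),
      𝒢.unionClosure V J → ℋ V J → globalCN 𝒢 J ≤ s) :
    ∀ (V : Type) [Fintype V] (H : SimpleGraph V), ℋ V H →
      globalCN 𝒢 H ≤ s * unionCN 𝒢 H := by
  intro V _ H hH
  by_cases hc : ∃ c : GraphCover H, c.InClass 𝒢 ∧ c.Injective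
  swap
  · simp [globalCN_eq_zero_of_not_exists hc]
  obtain ⟨c, hc𝒢, hcinj, f, hf⟩ := exists_isUnion_unionCN hc
  have := c.finι
  have := c.finW
  choose d hd𝒢 hdinj hd using fun k => exists_isGlobal_of_injective_hom hmon hs hH
    (fun i : {i // f i = k} => hc𝒢 i) ((c.merge f).φ k) ((hcinj.merge hf) k)
  exact Nat.sInf_le ⟨(c.merge f).bind d, .bind hd𝒢, (hcinj.merge hf).bind hdinj,
    (c.isGlobal_merge f).bind hd⟩
end

section
/- Let G be a component-closed guest class and H a graph of treewidth at most w. Then the union G-covering number of H is at most (w+1) times the local G-covering number of H: c_u(G,H) ≤ (w+1)·c_l(G,H). -/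
open SimpleGraph

/-!
Split the guests of an optimal injective `s`-local cover into their connected components; the
cover stays in the class, injective and `s`-local. The vertices of a connected guest meet the bags
of a subtree of the tree decomposition; root the tree and call the node of that subtree closest to
the root its top. If two guests share a vertex, the top of the one with the deeper top lies in the
subtree of the other. Colour the guests greedily in order of increasing depth of their tops: the
earlier guests conflicting with a guest `i` all meet the bag at the top of `i`, and at most
`(w + 1) * s` guests meet a bag, so `(w + 1) * s` colours suffice. A colour class is a family of
pairwise vertex-disjoint guests.
-/

theorem intersectionGraph_adj {ι V : Type} {S : ι → Set V} {i j : ι} :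
    (intersectionGraph S).Adj i j ↔ i ≠ j ∧ (S i ∩ S j).Nonempty := by
  simp [intersectionGraph, Set.inter_comm]

namespace SimpleGraph

variable {α : Type*} {T : SimpleGraph α}

theorem Walk.IsPath.append_of_support_inter {u v w : α} {p : T.Walk u v} {q : T.Walk v w}
    (hp : p.IsPath) (hq : q.IsPath) (h : ∀ z ∈ p.support, z ∈ q.support → z = v) :
    (p.append q).IsPath := by
  have hq' := hq.support_nodup
  rw [← q.cons_tail_support, List.nodup_cons] at hq'
  rw [Walk.isPath_def, Walk.support_append]
  refine hp.support_nodup.append hq'.2 fun z hz hz' => ?_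
  obtain rfl := h z hz (List.mem_of_mem_tail hz')
  exact hq'.1 hz'

theorem IsAcyclic.support_subset_of_isPath (hT : T.IsAcyclic) {B : Set α}
    (hB : (T.induce B).Preconnected) {x y : α} (hx : x ∈ B) (hy : y ∈ B) {p : T.Walk x y}
    (hp : p.IsPath) : {z | z ∈ p.support} ⊆ B := by
  classical
  obtain ⟨q⟩ := hB ⟨x, hx⟩ ⟨y, hy⟩
  let q' := q.map (Embedding.induce B).toHom
  have hq' : {z | z ∈ q'.support} ⊆ B := by
    rintro _ hz
    obtain ⟨z, -, rfl⟩ := List.mem_map.mp (q.support_map _ ▸ hz)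
    exact z.2
  rw [Subtype.mk.inj <| hT.subsingleton_path x y |>.elim ⟨p, hp⟩ q'.toPath]
  exact fun z hz => hq' (q'.support_toPath_subset_support hz)

theorem IsTree.length_eq_dist_of_isPath (hT : T.IsTree) {u v : α} {p : T.Walk u v}
    (hp : p.IsPath) : p.length = T.dist u v := by
  obtain ⟨q, hq, hlen⟩ := hT.connected.exists_path_of_dist u v
  rw [← hlen,
    Subtype.mk.inj <| hT.isAcyclic.subsingleton_path u v |>.elim ⟨p, hp⟩ ⟨q, hq⟩]

theorem IsTree.dist_add_dist_of_mem_support (hT : T.IsTree) {u v z : α} {p : T.Walk u v}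
    (hp : p.IsPath) (hz : z ∈ p.support) : T.dist u z + T.dist z v = T.dist u v := by
  classical
  rw [← hT.length_eq_dist_of_isPath (hp.takeUntil hz),
    ← hT.length_eq_dist_of_isPath (hp.dropUntil hz), ← hT.length_eq_dist_of_isPath hp,
    ← Walk.length_append, p.take_spec hz]

theorem IsTree.mem_of_dist_add_dist_eq (hT : T.IsTree) {B : Set α}
    (hB : (T.induce B).Preconnected) {x y z : α} (hx : x ∈ B) (hy : y ∈ B)
    (h : T.dist x z + T.dist z y = T.dist x y) : z ∈ B := by
  obtain ⟨p, -, hp⟩ := hT.connected.exists_path_of_dist x z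
  obtain ⟨q, -, hq⟩ := hT.connected.exists_path_of_dist z y
  have hpq : (p.append q).IsPath :=
    (p.append q).isPath_of_length_eq_dist (by rw [Walk.length_append, hp, hq, h])
  exact hT.isAcyclic.support_subset_of_isPath hB hx hy hpq
    (Walk.mem_support_append_iff _ _ |>.2 (Or.inl p.end_mem_support))

/-- The vertex `r` of a connected set `A` closest to the root `t₀` lies on the path from every
vertex of `A` to the root. -/
theorem IsTree.dist_eq_dist_add_dist_of_isMinOn (hT : T.IsTree) {A : Set α}
    (hA : (T.induce A).Preconnected) {t₀ r x : α} (hr : r ∈ A)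
    (hmin : IsMinOn (T.dist · t₀) A r) (hx : x ∈ A) :
    T.dist x t₀ = T.dist x r + T.dist r t₀ := by
  obtain ⟨p, hp, hplen⟩ := hT.connected.exists_path_of_dist x r
  obtain ⟨q, hq, hqlen⟩ := hT.connected.exists_path_of_dist r t₀
  have hpq : (p.append q).IsPath := by
    refine hp.append_of_support_inter hq fun z hzp hzq => ?_
    have hzA : z ∈ A := hT.isAcyclic.support_subset_of_isPath hA hx hr hp hzp
    have hsplit := hT.dist_add_dist_of_mem_support hq hzq
    have hle := isMinOn_iff.mp hmin z hzA
    exact ((hT.connected.dist_eq_zero_iff).mp (by omega)).symm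
  rw [← hT.length_eq_dist_of_isPath hpq, Walk.length_append, hplen, hqlen]

theorem IsTree.mem_of_isMinOn_of_dist_le (hT : T.IsTree) {A B : Set α}
    (hA : (T.induce A).Preconnected) (hB : (T.induce B).Preconnected) (hAB : (A ∩ B).Nonempty)
    {t₀ rA rB : α} (hrA : rA ∈ A) (hrB : rB ∈ B) (hminA : IsMinOn (T.dist · t₀) A rA)
    (hminB : IsMinOn (T.dist · t₀) B rB) (hle : T.dist rB t₀ ≤ T.dist rA t₀) :
    rA ∈ B := by
  obtain ⟨x, hxA, hxB⟩ := hAB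
  have hminAB : IsMinOn (T.dist · t₀) (A ∪ B) rB := by
    rintro z (hz | hz)
    · exact hle.trans (hminA hz)
    · exact hminB hz
  have h₁ := hT.dist_eq_dist_add_dist_of_isMinOn hA hrA hminA hxA
  have h₂ := hT.dist_eq_dist_add_dist_of_isMinOn hB hrB hminB hxB
  have h₃ := hT.dist_eq_dist_add_dist_of_isMinOn
    (induce_union_connected hA hB ⟨x, hxA, hxB⟩).preconnected (Or.inr hrB) hminAB (Or.inl hrA)
  exact hT.mem_of_dist_add_dist_eq hB hxB hrB (by omega)

theorem colorable_of_forall_ncard_lt {J β : Type*} [Finite J] [LinearOrder β]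
    {G : SimpleGraph J} (f : J → β) {N : ℕ}
    (h : ∀ j, {k | G.Adj j k ∧ f k ≤ f j}.ncard < N) : G.Colorable N := by
  classical
  have := Fintype.ofFinite J
  suffices ∃ col : J → Fin N, ∀ j k, G.Adj j k → col j ≠ col k from
    let ⟨col, hcol⟩ := this; ⟨Coloring.mk col fun hjk => hcol _ _ hjk⟩
  have key (s : Finset J) :
      ∃ col : J → Fin N, ∀ j ∈ s, ∀ k ∈ s, G.Adj j k → col j ≠ col k := by
    induction s using Finset.induction_on_max_value f with
    | empty => exact ⟨fun j => ⟨0, (Nat.zero_le _).trans_lt (h j)⟩, by simp⟩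
    | insert a s has hmax ih =>
      obtain ⟨col, hcol⟩ := ih
      have hfree :
          ((s.filter (G.Adj a)).image col).card < (Finset.univ : Finset (Fin N)).card := by
        refine Finset.card_image_le.trans_lt ?_
        rw [Finset.card_univ, Fintype.card_fin, ← Set.ncard_coe_finset]
        refine (Set.ncard_le_ncard ?_).trans_lt (h a)
        intro k hk
        simp only [Finset.coe_filter, Set.mem_ofPred_eq] at hk
        exact ⟨hk.2, hmax k hk.1⟩
      obtain ⟨c, -, hc⟩ := Finset.exists_mem_notMem_of_card_lt_card hfree
      refine ⟨Function.update col a c, ?_⟩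
      have hnew : ∀ k ∈ s, G.Adj a k → c ≠ col k := fun k hk hak hck =>
        hc (Finset.mem_image.2 ⟨k, Finset.mem_filter.2 ⟨hk, hak⟩, hck.symm⟩)
      simp only [Finset.mem_insert]
      rintro j (rfl | hj) k (rfl | hk) hjk
      · exact (G.irrefl hjk).elim
      · simpa [hjk.ne'.symm, Function.update_of_ne hjk.ne'] using hnew k hk hjk
      · simpa [hjk.ne, Function.update_of_ne hjk.ne] using (hnew j hj hjk.symm).symm
      · rw [Function.update_of_ne (ne_of_mem_of_not_mem hj has),
          Function.update_of_ne (ne_of_mem_of_not_mem hk has)]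
        exact hcol j hj k hk hjk
  obtain ⟨col, hcol⟩ := key Finset.univ
  exact ⟨col, fun j k => hcol j (Finset.mem_univ _) k (Finset.mem_univ _)⟩

theorem Connected.induce_range {V W : Type*} {G : SimpleGraph V} {H : SimpleGraph W}
    (f : G →g H) (hG : G.Connected) : (H.induce (Set.range f)).Connected :=
  hG.map ⟨Set.rangeFactorization f, f.map_adj⟩ Set.rangeFactorization_surjective

theorem induce_setOf_bag_inter_preconnected {ι V : Type*} {T : SimpleGraph ι}
    {H : SimpleGraph V} {bag : ι → Set V}
    (hadj : ∀ ⦃u v⦄, H.Adj u v → ∃ i, u ∈ bag i ∧ v ∈ bag i)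
    (hbag : ∀ v, (T.induce {i | v ∈ bag i}).Connected) {R : Set V}
    (hR : (H.induce R).Preconnected) : (T.induce {i | (bag i ∩ R).Nonempty}).Preconnected := by
  set S := {i | (bag i ∩ R).Nonempty}
  have hvert : ∀ v (hv : v ∈ R) t t' (ht : v ∈ bag t) (ht' : v ∈ bag t'),
      (T.induce S).Reachable ⟨t, v, ht, hv⟩ ⟨t', v, ht', hv⟩ :=
    fun v hv t t' ht ht' => ((hbag v).preconnected ⟨t, ht⟩ ⟨t', ht'⟩).map
      (induceHomOfLE T fun i (hi : v ∈ bag i) => (⟨v, hi, hv⟩ : (bag i ∩ R).Nonempty)).toHom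
  have hwalk : ∀ (a b : R), (H.induce R).Walk a b → ∀ t t' (ht : a.1 ∈ bag t)
      (ht' : b.1 ∈ bag t'), (T.induce S).Reachable ⟨t, a, ht, a.2⟩ ⟨t', b, ht', b.2⟩ := by
    intro a b p
    induction p with
    | nil => exact hvert _ (Subtype.prop _)
    | @cons a b _ hab _ ih =>
      intro t t' ht ht'
      obtain ⟨i, hai, hbi⟩ := hadj hab
      exact (hvert a a.2 t i ht hai).trans (ih i t' hbi ht')
  rintro ⟨t, v, hvt, hvR⟩ ⟨t', v', hvt', hvR'⟩
  obtain ⟨p⟩ := hR ⟨v, hvR⟩ ⟨v', hvR'⟩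
  exact hwalk _ _ p t t' hvt hvt'

end SimpleGraph

namespace GraphCover

variable {V : Type} {H : SimpleGraph V}

def components (c : GraphCover H) : GraphCover H where
  ι := Σ i, (c.G i).ConnectedComponent
  finι := have := c.finι; have := c.finW; inferInstance
  W j := j.2.supp
  finW _ := have := c.finW; inferInstance
  G j := (c.G j.1).induce j.2.supp
  φ j := (c.φ j.1).comp (Embedding.induce _).toHom
  edge_surj := by
    intro u v huv
    obtain ⟨i, a, b, hab, rfl, rfl⟩ := c.edge_surj huv
    exact ⟨⟨i, (c.G i).connectedComponentMk a⟩, ⟨a, rfl⟩,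
      ⟨b, (ConnectedComponent.connectedComponentMk_eq_of_adj hab).symm⟩, hab, rfl, rfl⟩

theorem inClass_components {c : GraphCover H} {𝒢 : GraphClass} (hcc : 𝒢.ComponentClosed)
    (h : c.InClass 𝒢) : c.components.InClass 𝒢 :=
  fun j => hcc _ _ (h j.1) j.2

theorem Injective.components {c : GraphCover H} (h : c.Injective) : c.components.Injective :=
  fun j => (h j.1).comp Subtype.val_injective

theorem connected_components_G (c : GraphCover H) (j : c.components.ι) :
    (c.components.G j).Connected :=
  (ConnectedComponent.maximal_connected_induce_supp j.2).prop

theorem mult_components (c : GraphCover H) (v : V) : c.components.mult v = c.mult v :=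
  Nat.card_congr <| Equiv.subtypeEquiv
    ((Equiv.sigmaAssoc fun i (C : (c.G i).ConnectedComponent) => C.supp).trans
      (Equiv.sigmaCongrRight fun i => Equiv.sigmaFiberEquiv (c.G i).connectedComponentMk))
    fun _ => Iff.rfl

theorem IsLocal.components {c : GraphCover H} {s : ℕ} (h : c.IsLocal s) :
    c.components.IsLocal s :=
  fun v => (c.mult_components v).trans_le (h v)

theorem isLocal_natCard_sigma (c : GraphCover H) : c.IsLocal (Nat.card (Σ i, c.W i)) :=
  have := c.finι; have := c.finW; fun _ => Finite.card_subtype_le _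

theorem isUnion_of_colorable {c : GraphCover H} {t : ℕ}
    (h : (intersectionGraph fun i => Set.range (c.φ i)).Colorable t) : c.IsUnion t := by
  obtain ⟨C⟩ := h
  refine ⟨C, fun i j hij hC => Set.disjoint_iff_inter_eq_empty.2 ?_⟩
  by_contra hne
  exact C.valid (intersectionGraph_adj.2 ⟨hij, Set.nonempty_iff_ne_empty.2 hne⟩) hC

theorem IsLocal.ncard_setOf_inter_range_nonempty_le {c : GraphCover H} {s : ℕ}
    (hc : c.IsLocal s) (X : Set V) [Finite X] :
    {i | (X ∩ Set.range (c.φ i)).Nonempty}.ncard ≤ X.ncard * s := by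
  have := c.finι; have := c.finW; have := Fintype.ofFinite X
  choose x hx using fun i : {i | (X ∩ Set.range (c.φ i)).Nonempty} =>
    let ⟨_, hv, a, ha⟩ := i.2; (⟨a, ha ▸ hv⟩ : ∃ a, c.φ i a ∈ X)
  let f (i : {i | (X ∩ Set.range (c.φ i)).Nonempty}) :
      Σ v : X, {p : Σ i, c.W i // c.φ p.1 p.2 = v} := ⟨⟨_, hx i⟩, ⟨i.1, x i⟩, rfl⟩
  have hf : Function.Injective f := fun i j h => Subtype.ext (congrArg (·.2.1.1) h)
  calc {i | (X ∩ Set.range (c.φ i)).Nonempty}.ncard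
      = Nat.card {i | (X ∩ Set.range (c.φ i)).Nonempty} := (Nat.card_coe_set_eq _).symm
    _ ≤ Nat.card (Σ v : X, {p : Σ i, c.W i // c.φ p.1 p.2 = v}) :=
      Nat.card_le_card_of_injective f hf
    _ = ∑ v : X, c.mult v := Nat.card_sigma
    _ ≤ ∑ _v : X, s := Finset.sum_le_sum fun v _ => hc v
    _ = X.ncard * s := by simp

theorem IsLocal.isUnion_of_treewidthLE [Finite V] {c : GraphCover H} {s w : ℕ}
    (hloc : c.IsLocal s) (hconn : ∀ i, (c.G i).Connected)
    (htw : TreewidthLE H w) : c.IsUnion ((w + 1) * s) := by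
  obtain ⟨ι, T, bag, hTc, hTa, hcov, hedge, hbag, hcard⟩ := htw
  have hT : T.IsTree := ⟨hTc, hTa⟩
  have := c.finι
  let S i := {t | (bag t ∩ Set.range (c.φ i)).Nonempty}
  have hS i : (T.induce (S i)).Preconnected :=
    induce_setOf_bag_inter_preconnected hedge hbag ((hconn i).induce_range (c.φ i)).preconnected
  have hS_ne i : (S i).Nonempty :=
    let ⟨a⟩ := (hconn i).nonempty
    let ⟨t, ht⟩ := hcov (c.φ i a)
    ⟨t, _, ht, a, rfl⟩
  obtain ⟨t₀⟩ := hTc.nonempty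
  let top i := Function.argminOn (T.dist · t₀) (S i) (hS_ne i)
  have htop_mem i : top i ∈ S i := Function.argminOn_mem _ _ _
  have htop_min i : IsMinOn (T.dist · t₀) (S i) (top i) :=
    isMinOn_iff.2 fun _ ht => Function.argminOn_le (T.dist · t₀) _ ht
  refine isUnion_of_colorable <|
    colorable_of_forall_ncard_lt (fun i => T.dist (top i) t₀) fun i => ?_
  set earlier := {k | (intersectionGraph fun j => Set.range (c.φ j)).Adj i k ∧
    T.dist (top k) t₀ ≤ T.dist (top i) t₀}
  have hsub : insert i earlier ⊆ {k | top i ∈ S k} := by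
    rintro k (rfl | ⟨hik, hle⟩)
    · exact htop_mem k
    · obtain ⟨v, hvi, hvk⟩ := (intersectionGraph_adj.1 hik).2
      obtain ⟨t, ht⟩ := hcov v
      exact hT.mem_of_isMinOn_of_dist_le (hS i) (hS k) ⟨t, ⟨v, ht, hvi⟩, v, ht, hvk⟩
        (htop_mem i) (htop_mem k) (htop_min i) (htop_min k) hle
  calc earlier.ncard < (insert i earlier).ncard := by
        rw [Set.ncard_insert_of_notMem fun h => (intersectionGraph _).irrefl h.1]
        exact Nat.lt_succ_self _
    _ ≤ (bag (top i)).ncard * s :=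
      (Set.ncard_le_ncard hsub).trans (hloc.ncard_setOf_inter_range_nonempty_le _)
    _ ≤ (w + 1) * s := Nat.mul_le_mul_right _ (hcard _)

end GraphCover

theorem union_le_treewidth_mul_local_general (𝒢 : GraphClass)
    (hcc : 𝒢.ComponentClosed) {V : Type} [Fintype V] (H : SimpleGraph V)
    (w : ℕ) (htw : TreewidthLE H w) :
    unionCN 𝒢 H ≤ (w + 1) * localCN 𝒢 H := by
  rcases Set.eq_empty_or_nonempty
    {s | ∃ c : GraphCover H, c.InClass 𝒢 ∧ c.Injective ∧ c.IsLocal s} with hempty | hne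
  · -- Without any injective `𝒢`-cover both covering numbers are the junk value `sInf ∅ = 0`.
    have : unionCN 𝒢 H = 0 := by
      refine Nat.sInf_eq_zero.2 (Or.inr (Set.eq_empty_of_forall_notMem ?_))
      rintro t ⟨c, hcl, hinj, -⟩
      exact hempty.subset ⟨c, hcl, hinj, c.isLocal_natCard_sigma⟩
    simp [this]
  · obtain ⟨c, hcl, hinj, hloc⟩ := Nat.sInf_mem hne
    exact Nat.sInf_le ⟨c.components, c.inClass_components hcc hcl, hinj.components,
      hloc.components.isUnion_of_treewidthLE c.connected_components_G htw⟩

/-- for a component-closed guest class and a host of treewidth at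
most `w`, we have `c_u ≤ (w+1) · c_l`. -/
theorem union_le_treewidth_mul_local (𝒢 : GraphClass) (h2 : 𝒢.ContainsK2)
    (hcc : 𝒢.ComponentClosed) {V : Type} [Fintype V] (H : SimpleGraph V)
    (w : ℕ) (htw : TreewidthLE H w) :
    unionCN 𝒢 H ≤ (w + 1) * localCN 𝒢 H :=
  union_le_treewidth_mul_local_general 𝒢 hcc H w htw
end

section
/- If G is a hereditary graph class containing K_2, then for every star K_{1,n}, the folded G-covering number equals the local G-covering number: c_f(G, K_{1,n}) = c_l(G, K_{1,n}). -/
open SimpleGraph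

/-! Given a folded cover of a graph all of whose edges pass through a centre `v₀`, split every
guest at each of its vertices `a` over `v₀`: keep `a` together with one neighbour of `a` for each
host vertex that the neighbours of `a` reach. These induced subgraphs of the guests embed into the
host, still cover every edge, and there are `mult v₀` of them, so no host vertex gets more than
`mult v₀` preimages. -/

namespace SimpleGraph.Hom

variable {W V : Type} {G : SimpleGraph W} {H : SimpleGraph V}

theorem exists_injOn_star (f : G →g H) (a : W) :
    ∃ S : Set W, a ∈ S ∧ S.InjOn f ∧
      ∀ b, G.Adj a b → ∃ b' ∈ S, G.Adj a b' ∧ f b' = f b := by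
  let pick (v : {v // ∃ b, G.Adj a b ∧ f b = v}) : W := v.2.choose
  have pick_spec (v) : G.Adj a (pick v) ∧ f (pick v) = v := v.2.choose_spec
  have map_ne (v) : f a ≠ f (pick v) := (f.map_adj (pick_spec v).1).ne
  refine ⟨insert a (Set.range pick), Set.mem_insert a _, ?_, fun b hb =>
    ⟨pick ⟨f b, b, hb, rfl⟩, Set.mem_insert_of_mem _ ⟨_, rfl⟩, pick_spec _⟩⟩
  rintro x (rfl | ⟨v, rfl⟩) y (rfl | ⟨w, rfl⟩) hxy
  · rfl
  · exact absurd hxy (map_ne w)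
  · exact absurd hxy.symm (map_ne v)
  · obtain rfl : v = w := Subtype.ext ((pick_spec v).2.symm.trans (hxy.trans (pick_spec w).2))
    rfl

end SimpleGraph.Hom

namespace GraphCover

variable {V : Type} {H : SimpleGraph V}

theorem mult_le_card_of_injective {c : GraphCover H} (hc : c.Injective) (v : V) :
    c.mult v ≤ Nat.card c.ι := by
  have := c.finι
  refine Nat.card_le_card_of_injective (fun q => q.1.1) ?_
  rintro ⟨⟨i, x⟩, hx⟩ ⟨⟨j, y⟩, hy⟩ (rfl : i = j)
  obtain rfl := hc i (hx.trans hy.symm)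
  rfl

noncomputable def starSet (c : GraphCover H) (p : Σ i, c.W i) : Set (c.W p.1) :=
  ((c.φ p.1).exists_injOn_star p.2).choose

theorem mem_starSet (c : GraphCover H) (p : Σ i, c.W i) : p.2 ∈ c.starSet p :=
  ((c.φ p.1).exists_injOn_star p.2).choose_spec.1

theorem injOn_starSet (c : GraphCover H) (p : Σ i, c.W i) : (c.starSet p).InjOn (c.φ p.1) :=
  ((c.φ p.1).exists_injOn_star p.2).choose_spec.2.1

theorem exists_adj_mem_starSet (c : GraphCover H) (p : Σ i, c.W i) {b : c.W p.1}
    (hb : (c.G p.1).Adj p.2 b) :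
    ∃ b' ∈ c.starSet p, (c.G p.1).Adj p.2 b' ∧ c.φ p.1 b' = c.φ p.1 b :=
  ((c.φ p.1).exists_injOn_star p.2).choose_spec.2.2 b hb

theorem exists_edge_in_starSet (c : GraphCover H) {v₀ : V} (hv₀ : ∀ e ∈ H.edgeSet, v₀ ∈ e)
    {u w : V} (huw : H.Adj u w) :
    ∃ p : {p : Σ i, c.W i // c.φ p.1 p.2 = v₀}, ∃ a ∈ c.starSet p.1, ∃ b ∈ c.starSet p.1,
      (c.G p.1.1).Adj a b ∧ c.φ p.1.1 a = u ∧ c.φ p.1.1 b = w := by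
  have from_center {w : V} (h : H.Adj v₀ w) : ∃ p : {p : Σ i, c.W i // c.φ p.1 p.2 = v₀},
      ∃ b ∈ c.starSet p.1, (c.G p.1.1).Adj p.1.2 b ∧ c.φ p.1.1 b = w := by
    obtain ⟨i, a, b, hab, ha, rfl⟩ := c.edge_surj h
    obtain ⟨b', hb', hab', hb'b⟩ := c.exists_adj_mem_starSet ⟨i, a⟩ hab
    exact ⟨⟨⟨i, a⟩, ha⟩, b', hb', hab', hb'b⟩
  rcases Sym2.mem_iff.mp (hv₀ s(u, w) huw) with rfl | rfl
  · obtain ⟨p, b, hb, hab, hbw⟩ := from_center huw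
    exact ⟨p, _, c.mem_starSet p.1, b, hb, hab, p.2, hbw⟩
  · obtain ⟨p, b, hb, hab, hbu⟩ := from_center huw.symm
    exact ⟨p, b, hb, _, c.mem_starSet p.1, hab.symm, hbu, p.2⟩

noncomputable def splitAt (c : GraphCover H) (v₀ : V) (hv₀ : ∀ e ∈ H.edgeSet, v₀ ∈ e) :
    GraphCover H where
  ι := {p : Σ i, c.W i // c.φ p.1 p.2 = v₀}
  finι := have := c.finι; have := c.finW; Subtype.finite
  W p := c.starSet p.1
  finW p := have := c.finW p.1.1; Subtype.finite
  G p := (c.G p.1.1).induce (c.starSet p.1)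
  φ p := (c.φ p.1.1).comp (Embedding.induce _).toHom
  edge_surj _ _ huw := by
    obtain ⟨p, a, ha, b, hb, hab, rfl, rfl⟩ := c.exists_edge_in_starSet hv₀ huw
    exact ⟨p, ⟨a, ha⟩, ⟨b, hb⟩, hab, rfl, rfl⟩

variable {c : GraphCover H} {v₀ : V} {hv₀ : ∀ e ∈ H.edgeSet, v₀ ∈ e}

theorem injective_splitAt : (c.splitAt v₀ hv₀).Injective := fun p _ _ h =>
  Subtype.ext (c.injOn_starSet p.1 (Subtype.prop _) (Subtype.prop _) h)

theorem InClass.splitAt {𝒢 : GraphClass} (hher : 𝒢.Hereditary) (hc : c.InClass 𝒢) :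
    (c.splitAt v₀ hv₀).InClass 𝒢 := fun p =>
  hher _ _ (hc p.1.1) _

theorem IsLocal.splitAt {s : ℕ} (hc : c.IsLocal s) : (c.splitAt v₀ hv₀).IsLocal s := fun v =>
  (mult_le_card_of_injective injective_splitAt v).trans (hc v₀)

end GraphCover

theorem foldedCN_eq_localCN_of_forall_mem_edgeSet {𝒢 : GraphClass} (hher : 𝒢.Hereditary)
    {V : Type} {H : SimpleGraph V} (v₀ : V) (hv₀ : ∀ e ∈ H.edgeSet, v₀ ∈ e) :
    foldedCN 𝒢 H = localCN 𝒢 H :=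
  congrArg sInf <| Set.ext fun _ =>
    ⟨fun ⟨c, hc, hl⟩ => ⟨c.splitAt v₀ hv₀, hc.splitAt hher, GraphCover.injective_splitAt,
      hl.splitAt⟩,
    fun ⟨c, hc, _, hl⟩ => ⟨c, hc, hl⟩⟩

theorem completeBipartiteGraph_center_mem_edgeSet {α β : Type} [Unique α] :
    ∀ e ∈ (completeBipartiteGraph α β).edgeSet, (Sum.inl default : α ⊕ β) ∈ e := by
  rintro ⟨x | x, y | y⟩ h <;> simp_all [Unique.eq_default]

theorem folded_eq_local_on_stars_general (𝒢 : GraphClass)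
    (hher : 𝒢.Hereditary) (n : ℕ) :
    foldedCN 𝒢 (completeBipartiteGraph (Fin 1) (Fin n)) =
      localCN 𝒢 (completeBipartiteGraph (Fin 1) (Fin n)) :=
  foldedCN_eq_localCN_of_forall_mem_edgeSet hher _ completeBipartiteGraph_center_mem_edgeSet

/-- for a hereditary guest class containing `K₂` and every star
`K_{1,n}`, the folded and local covering numbers coincide. -/
theorem folded_eq_local_on_stars (𝒢 : GraphClass) (h2 : 𝒢.ContainsK2)
    (hher : 𝒢.Hereditary) (n : ℕ) :
    foldedCN 𝒢 (completeBipartiteGraph (Fin 1) (Fin n)) =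
      localCN 𝒢 (completeBipartiteGraph (Fin 1) (Fin n)) :=
  folded_eq_local_on_stars_general 𝒢 hher n
end

section
/- Every graph H with maximum average degree at most d is the union of at most 2d weak induced star forests, i.e., there are at most ⌈2d⌉ star forests F₁,…,F_k, each of whose connected components is an induced subgraph of H, whose union of edge sets is E(H). -/
open SimpleGraph

/-!
Order the vertices so that each has at most `k = ⌊d⌋` neighbours below it; this is possible
because every nonempty vertex set spans a vertex of degree at most `⌊d⌋`. Colour the edges,
oriented downwards, greedily with `k` colours so that the downward edges at a vertex get distinct
colours and two edges `v u`, `w u` of the same colour never have adjacent tails `v`, `w`. Each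
colour class is then a rooted forest whose sibling sets are independent in `H`. Splitting a class
by the parity of the depth of the parent yields two star forests whose stars are induced
subgraphs of `H`, so `2k ≤ ⌈2d⌉` weak induced star forests suffice.
-/

open Finset

namespace SimpleGraph

variable {V : Type*}

/-- Excludes paths on four vertices, and also triangles (as walks `a b c a`). -/
def P4Free (G : SimpleGraph V) : Prop :=
  ∀ a b c d, G.Adj a b → G.Adj b c → G.Adj c d → a = c ∨ b = d

variable {G : SimpleGraph V}

theorem P4Free.isAcyclic (hG : G.P4Free) : G.IsAcyclic := by
  intro v c hc
  have hlen := hc.three_le_length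
  rcases hG _ _ _ _ (c.adj_getVert_succ (i := 0) (by omega))
      (c.adj_getVert_succ (i := 1) (by omega)) (c.adj_getVert_succ (i := 2) (by omega))
    with h02 | h13
  · exact hc.getVert_sub_one_ne_getVert_add_one (i := 1) (by omega) h02
  · exact hc.getVert_sub_one_ne_getVert_add_one (i := 2) (by omega) h13

theorem P4Free.reachable_cases (hG : G.P4Free) {u v : V} (h : G.Reachable u v) :
    u = v ∨ G.Adj u v ∨ ∃ w, G.Adj u w ∧ G.Adj w v := by
  obtain ⟨p⟩ := h
  induction p with
  | nil => exact Or.inl rfl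
  | cons hxz _ ih =>
    rcases ih with rfl | hzy | ⟨w, hzw, hwy⟩
    · exact Or.inr (Or.inl hxz)
    · exact Or.inr (Or.inr ⟨_, hxz, hzy⟩)
    · rcases hG _ _ _ _ hxz hzw hwy with rfl | rfl
      · exact Or.inr (Or.inl hwy)
      · exact Or.inr (Or.inl hxz)

end SimpleGraph

theorem SimpleGraph.P4Free.isStarForest {V : Type} {G : SimpleGraph V} (hG : G.P4Free) :
    IsStarForest G :=
  ⟨hG.isAcyclic, hG⟩

/-- `R x y` reads "`x` is a leaf of the star centred at `y`". -/
structure IsStarRelation {V : Type*} (R : V → V → Prop) : Prop where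
  unique : ∀ ⦃x y y'⦄, R x y → R x y' → y = y'
  not_chain : ∀ ⦃x y z⦄, R x y → ¬ R y z

namespace IsStarRelation

variable {V : Type} {R : V → V → Prop}

theorem p4Free (hR : IsStarRelation R) : (SimpleGraph.fromRel R).P4Free := by
  rintro a b c d ⟨-, hab⟩ ⟨-, hbc⟩ ⟨-, hcd⟩
  rcases hbc with hbc | hcb
  · rcases hab with hab | hba
    · exact (hR.not_chain hab hbc).elim
    · exact Or.inl (hR.unique hba hbc)
  · rcases hcd with hcd | hdc
    · exact Or.inr (hR.unique hcb hcd)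
    · exact (hR.not_chain hdc hcb).elim

theorem isWeakInduced (hR : IsStarRelation R) {H : SimpleGraph V}
    (hle : ∀ ⦃x y⦄, R x y → H.Adj x y) (hsib : ∀ ⦃x x' y⦄, R x y → R x' y → ¬ H.Adj x x') :
    IsWeakInduced (SimpleGraph.fromRel R) H := by
  refine ⟨fun x y h => h.2.elim (fun h => hle h) (fun h => (hle h).symm), fun u v huv hadj => ?_⟩
  rcases hR.p4Free.reachable_cases huv with rfl | h | ⟨w, ⟨-, huw⟩, ⟨-, hwv⟩⟩
  · exact (H.irrefl hadj).elim
  · exact h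
  · exfalso
    rcases huw with huw | hwu <;> rcases hwv with hwv | hvw
    · exact hR.not_chain huw hwv
    · exact hsib huw hvw hadj
    · exact H.ne_of_adj hadj (hR.unique hwu hwv)
    · exact hR.not_chain hvw hwu

end IsStarRelation

section ParentDepth

variable {V : Type*} {rank : V → ℕ} {par : V → V → Prop}

open Classical in
/-- The depth of `x` in the forest where `par x y` makes `y` the parent of `x`; the rank
condition only serves to make the recursion well founded. -/
noncomputable def parentDepth (rank : V → ℕ) (par : V → V → Prop) (x : V) : ℕ :=
  if h : ∃ y, par x y ∧ rank y < rank x then parentDepth rank par h.choose + 1 else 0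
termination_by rank x
decreasing_by exact h.choose_spec.2

theorem parentDepth_eq_succ (huniq : ∀ ⦃x y y'⦄, par x y → par x y' → y = y') {x y : V}
    (hxy : par x y) (hr : rank y < rank x) :
    parentDepth rank par x = parentDepth rank par y + 1 := by
  have h : ∃ y, par x y ∧ rank y < rank x := ⟨y, hxy, hr⟩
  rw [parentDepth, dif_pos h, huniq h.choose_spec.1 hxy]

theorem isStarRelation_parentDepth_mod_two (hrank : ∀ ⦃x y⦄, par x y → rank y < rank x)
    (huniq : ∀ ⦃x y y'⦄, par x y → par x y' → y = y') (b : ℕ) :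
    IsStarRelation fun x y => par x y ∧ parentDepth rank par y % 2 = b where
  unique _ _ _ h h' := huniq h.1 h'.1
  not_chain _ _ _ h h' := by
    have := parentDepth_eq_succ huniq h'.1 (hrank h'.1)
    omega

end ParentDepth

namespace SimpleGraph

section Degeneracy

variable {V : Type*} {H : SimpleGraph V} [DecidableRel H.Adj] {k : ℕ}

variable (H) in
def lowerNeighbors [Fintype V] (rank : V → ℕ) (v : V) : Finset V :=
  {u | H.Adj v u ∧ rank u < rank v}

variable (H) in
structure IsDegeneracyRank [Fintype V] (k : ℕ) (rank : V → ℕ) : Prop where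
  injective : Function.Injective rank
  card_lowerNeighbors_le : ∀ v, #(H.lowerNeighbors rank v) ≤ k

variable (H) in
theorem sum_card_filter_adj_eq_two_mul_card_edgeSet_induce (s : Finset V) :
    ∑ v ∈ s, #{u ∈ s | H.Adj v u} = 2 * Nat.card (H.induce (s : Set V)).edgeSet := by
  rw [Nat.card_eq_fintype_card, ← edgeFinset_card, ← sum_degrees_eq_twice_card_edges,
    ← sum_coe_sort s]
  refine Fintype.sum_congr _ _ fun v => ?_
  rw [← card_neighborFinset_eq_degree, ← card_map (Function.Embedding.subtype _)]
  congr 1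
  ext u
  simp [and_comm]

theorem exists_rank_of_forall_exists_card_le
    (hsmall : ∀ s : Finset V, s.Nonempty → ∃ v ∈ s, #{u ∈ s | H.Adj v u} ≤ k) (s : Finset V) :
    ∃ r : V → ℕ, (∀ v ∈ s, r v < #s) ∧ Set.InjOn r s ∧
      ∀ v ∈ s, #{u ∈ s | H.Adj v u ∧ r u < r v} ≤ k := by
  classical
  induction s using Finset.strongInduction with | H s ih => ?_
  rcases s.eq_empty_or_nonempty with rfl | hs
  · exact ⟨fun _ => 0, by simp, by simp, by simp⟩
  obtain ⟨v, hv, hdeg⟩ := hsmall s hs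
  obtain ⟨r, hlt, hinj, hback⟩ := ih (s.erase v) (erase_ssubset hv)
  have hcard : #(s.erase v) + 1 = #s := card_erase_add_one hv
  have hlt' : ∀ u ∈ s, u ≠ v → r u < #(s.erase v) := fun u hu huv =>
    hlt u (mem_erase.mpr ⟨huv, hu⟩)
  refine ⟨Function.update r v #(s.erase v), fun u hu => ?_, fun u hu w hw h => ?_, fun u hu => ?_⟩
  · rcases eq_or_ne u v with rfl | huv
    · simp only [Function.update_self]; omega
    · rw [Function.update_of_ne huv]; have := hlt' u hu huv; omega
  · by_cases huv : u = v <;> by_cases hwv : w = v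
    · exact huv.trans hwv.symm
    · subst huv
      rw [Function.update_self, Function.update_of_ne hwv] at h
      have := hlt' w hw hwv
      omega
    · subst hwv
      rw [Function.update_self, Function.update_of_ne huv] at h
      have := hlt' u hu huv
      omega
    · rw [Function.update_of_ne huv, Function.update_of_ne hwv] at h
      exact hinj (mem_erase.mpr ⟨huv, hu⟩) (mem_erase.mpr ⟨hwv, hw⟩) h
  · rcases eq_or_ne u v with rfl | huv
    · exact (card_le_card (monotone_filter_right _ fun _ _ h => h.1)).trans hdeg
    · refine (card_le_card fun w hw => ?_).trans (hback u (mem_erase.mpr ⟨huv, hu⟩))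
      simp only [mem_filter, Function.update_of_ne huv] at hw ⊢
      have hwv : w ≠ v := by
        rintro rfl
        have := hlt' u hu huv
        simp at hw; omega
      rw [Function.update_of_ne hwv] at hw
      exact ⟨mem_erase.mpr ⟨hwv, hw.1⟩, hw.2⟩

theorem exists_isDegeneracyRank [Fintype V]
    (hsmall : ∀ s : Finset V, s.Nonempty → ∃ v ∈ s, #{u ∈ s | H.Adj v u} ≤ k) :
    ∃ rank, H.IsDegeneracyRank k rank := by
  obtain ⟨r, -, hinj, hback⟩ := exists_rank_of_forall_exists_card_le hsmall univ
  exact ⟨r, by simpa using hinj, fun v => hback v (mem_univ v)⟩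

end Degeneracy

theorem exists_card_filter_adj_le_floor {V : Type} {H : SimpleGraph V} [DecidableRel H.Adj]
    {d : ℚ} (hmad : madLE H d) {s : Finset V} (hs : s.Nonempty) :
    ∃ v ∈ s, #{u ∈ s | H.Adj v u} ≤ ⌊d⌋₊ := by
  by_contra! hlarge
  have hsum : #s * (⌊d⌋₊ + 1) ≤ 2 * Nat.card (H.induce (s : Set V)).edgeSet := by
    rw [← sum_card_filter_adj_eq_two_mul_card_edgeSet_induce, ← smul_eq_mul, ← sum_const]
    exact sum_le_sum fun v hv => hlarge v hv
  have hmad_s := hmad s (coe_nonempty.mpr hs)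
  rw [show Nat.card (s : Set V) = #s by rw [Nat.card_coe_set_eq, Set.ncard_coe_finset]] at hmad_s
  have hpos : (0 : ℚ) < #s := by exact_mod_cast hs.card_pos
  have hfloor := Nat.lt_floor_add_one d
  have : (#s : ℚ) * (⌊d⌋₊ + 1) ≤ d * #s := le_trans (by exact_mod_cast hsum) hmad_s
  nlinarith

end SimpleGraph

noncomputable def mex (B : Finset ℕ) : ℕ :=
  Nat.find (Infinite.exists_notMem_finset B)

theorem mex_ne_of_mem {B : Finset ℕ} {b : ℕ} (hb : b ∈ B) : mex B ≠ b := by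
  rintro rfl
  exact Nat.find_spec (Infinite.exists_notMem_finset B) hb

theorem mex_le_card (B : Finset ℕ) : mex B ≤ #B := by
  have : range (mex B) ⊆ B := fun n hn => by
    by_contra h
    exact Nat.find_min (Infinite.exists_notMem_finset B) (mem_range.mp hn) h
  simpa using card_le_card this

namespace SimpleGraph

section GreedyColour

variable {V : Type*} [Fintype V] (H : SimpleGraph V) [DecidableRel H.Adj] (rank : V → ℕ)

/-- Avoiding the colours of the lower edges `v w` makes each colour class a rooted forest;
avoiding those of the edges `w u` with `w` a common neighbour above `u` and below `v` keeps the
children of `u` in a class pairwise non-adjacent. -/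
noncomputable def greedyColour (v u : V) : ℕ :=
  mex (({w | H.Adj v w ∧ rank w < rank u} : Finset V).attach.image (fun w => greedyColour v w.1) ∪
    ({w | H.Adj v w ∧ H.Adj w u ∧ rank u < rank w ∧ rank w < rank v} : Finset V).attach.image
      fun w => greedyColour w.1 u)
termination_by (rank v, rank u)
decreasing_by
  · have hw := w.2
    simp only [mem_filter] at hw
    exact Prod.Lex.right _ hw.2.2
  · have hw := w.2
    simp only [mem_filter] at hw
    exact Prod.Lex.left _ _ hw.2.2.2.2

variable {H rank} {k : ℕ} {u v w : V}

theorem greedyColour_ne_of_lt (hvw : H.Adj v w) (hr : rank w < rank u) :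
    H.greedyColour rank v u ≠ H.greedyColour rank v w := by
  rw [greedyColour]
  exact mex_ne_of_mem <| mem_union_left _ <|
    mem_image.mpr ⟨⟨w, mem_filter.mpr ⟨mem_univ _, hvw, hr⟩⟩, mem_attach _ _, rfl⟩

theorem greedyColour_ne_of_between (hvw : H.Adj v w) (hwu : H.Adj w u) (hu : rank u < rank w)
    (hv : rank w < rank v) : H.greedyColour rank v u ≠ H.greedyColour rank w u := by
  rw [greedyColour]
  exact mex_ne_of_mem <| mem_union_right _ <|
    mem_image.mpr ⟨⟨w, mem_filter.mpr ⟨mem_univ _, hvw, hwu, hu, hv⟩⟩, mem_attach _ _, rfl⟩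

theorem greedyColour_lt (hH : H.IsDegeneracyRank k rank) (huv : H.Adj v u)
    (hr : rank u < rank v) : H.greedyColour rank v u < k := by
  classical
  set A : Finset V := {w | H.Adj v w ∧ rank w < rank u}
  set B : Finset V := {w | H.Adj v w ∧ H.Adj w u ∧ rank u < rank w ∧ rank w < rank v}
  have hu : u ∈ H.lowerNeighbors rank v := by simp [lowerNeighbors, huv, hr]
  have hAB : A ∪ B ⊆ (H.lowerNeighbors rank v).erase u := by
    intro w hw
    simp only [A, B, mem_union, mem_filter, mem_univ, true_and] at hw
    rcases hw with ⟨hvw, hwu⟩ | ⟨hvw, -, huw, hwv⟩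
    · simp [lowerNeighbors, hvw, ne_of_apply_ne rank hwu.ne, hwu.trans hr]
    · simp [lowerNeighbors, hvw, ne_of_apply_ne rank huw.ne', hwv]
  have hdisj : Disjoint A B := disjoint_filter.mpr fun w _ hA hB => lt_asymm hA.2 hB.2.2.1
  have hcard := hH.card_lowerNeighbors_le v
  have hpos := card_pos.mpr ⟨u, hu⟩
  calc H.greedyColour rank v u ≤ #A + #B := by
        rw [greedyColour]
        refine (mex_le_card _).trans ((card_union_le _ _).trans (add_le_add ?_ ?_)) <;>
          exact card_image_le.trans card_attach.le
    _ = #(A ∪ B) := (card_union_of_disjoint hdisj).symm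
    _ ≤ #((H.lowerNeighbors rank v).erase u) := card_le_card hAB
    _ < k := by rw [card_erase_of_mem hu]; omega

variable (H rank) in
def colourClass (i : ℕ) (x y : V) : Prop :=
  H.Adj x y ∧ rank y < rank x ∧ H.greedyColour rank x y = i

variable {i : ℕ} {x x' y y' : V}

theorem colourClass_unique (hinj : Function.Injective rank) (h : H.colourClass rank i x y)
    (h' : H.colourClass rank i x y') : y = y' := by
  rcases lt_trichotomy (rank y) (rank y') with hlt | heq | hlt
  · exact absurd (h'.2.2.trans h.2.2.symm) (greedyColour_ne_of_lt h.1 hlt)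
  · exact hinj heq
  · exact absurd (h.2.2.trans h'.2.2.symm) (greedyColour_ne_of_lt h'.1 hlt)

theorem colourClass_not_adj (hinj : Function.Injective rank) (h : H.colourClass rank i x y)
    (h' : H.colourClass rank i x' y) : ¬ H.Adj x x' := by
  intro hxx'
  rcases lt_trichotomy (rank x) (rank x') with hlt | heq | hlt
  · exact greedyColour_ne_of_between hxx'.symm h.1 h.2.1 hlt (h'.2.2.trans h.2.2.symm)
  · exact H.ne_of_adj hxx' (hinj heq)
  · exact greedyColour_ne_of_between hxx' h'.1 h'.2.1 hlt (h.2.2.trans h'.2.2.symm)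

end GreedyColour

end SimpleGraph

theorem SimpleGraph.IsDegeneracyRank.exists_weakInduced_starForest_cover {V : Type} [Fintype V]
    {H : SimpleGraph V} [DecidableRel H.Adj] {k : ℕ} {rank : V → ℕ}
    (hH : H.IsDegeneracyRank k rank) :
    ∃ F : Fin (k * 2) → SimpleGraph V, (∀ j, IsStarForest (F j) ∧ IsWeakInduced (F j) H) ∧
      ∀ ⦃u v⦄, H.Adj u v → ∃ j, (F j).Adj u v := by
  let layer (i b : ℕ) (x y : V) : Prop :=
    H.colourClass rank i x y ∧ parentDepth rank (H.colourClass rank i) y % 2 = b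
  have hstar (i b : ℕ) : IsStarRelation (layer i b) :=
    isStarRelation_parentDepth_mod_two (rank := rank) (par := H.colourClass rank i)
      (fun _ _ h => h.2.1)
      (fun _ _ _ => colourClass_unique hH.injective) b
  refine ⟨fun j => fromRel (layer (finProdFinEquiv.symm j).1 (finProdFinEquiv.symm j).2),
    fun j => ⟨(hstar _ _).p4Free.isStarForest, (hstar _ _).isWeakInduced (fun _ _ h => h.1.1)
      fun _ _ _ h h' => colourClass_not_adj hH.injective h.1 h'.1⟩, ?_⟩
  intro u v huv
  wlog hr : rank v < rank u generalizing u v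
  · obtain ⟨j, hj⟩ := this huv.symm ((not_lt.mp hr).lt_of_ne (hH.injective.ne huv.ne))
    exact ⟨j, hj.symm⟩
  set i := H.greedyColour rank u v
  refine ⟨finProdFinEquiv (⟨i, greedyColour_lt hH huv hr⟩,
    ⟨_, Nat.mod_lt (parentDepth rank (H.colourClass rank i) v) two_pos⟩), ?_⟩
  simp only [Equiv.symm_apply_apply]
  exact ⟨huv.ne, Or.inl ⟨⟨huv, hr, rfl⟩, rfl⟩⟩

theorem floor_mul_two_le_ceil_two_mul {α : Type*} [Field α] [LinearOrder α] [IsStrictOrderedRing α]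
    [FloorSemiring α] (d : α) : ⌊d⌋₊ * 2 ≤ ⌈2 * d⌉₊ := by
  rcases le_or_gt 0 d with hd | hd
  · have : ((⌊d⌋₊ * 2 : ℕ) : α) ≤ 2 * d := by push_cast; linarith [Nat.floor_le hd]
    exact_mod_cast this.trans (Nat.le_ceil _)
  · simp [Nat.floor_of_nonpos hd.le]

/-- every graph with maximum average degree at most `d` is the
union of at most `⌈2d⌉` weak induced star forests. -/
theorem union_of_weak_induced_star_forests {V : Type} [Fintype V]
    (H : SimpleGraph V) (d : ℚ) (hmad : madLE H d) :
    ∃ k : ℕ, k ≤ ⌈2 * d⌉₊ ∧ ∃ F : Fin k → SimpleGraph V,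
      (∀ i, IsStarForest (F i) ∧ IsWeakInduced (F i) H) ∧
      ∀ ⦃u v⦄, H.Adj u v → ∃ i, (F i).Adj u v := by
  classical
  obtain ⟨rank, hrank⟩ := SimpleGraph.exists_isDegeneracyRank fun s hs =>
    SimpleGraph.exists_card_filter_adj_le_floor hmad hs
  exact ⟨_, floor_mul_two_le_ceil_two_mul d, hrank.exists_weakInduced_starForest_cover⟩
end

section
/- If G is a hereditary guest class containing K_2 with maximum average degree at most d, then for every graph H we have c_u(G,H) ≤ 2d·(c_f(G,H))². -/
open SimpleGraph

/-!
A folded cover of `H` of locality `s` by guests of maximum average degree at most `d` shows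
`mad H ≤ d * s`: the ordered edges inside any vertex set `S` lift to guest edges inside the
preimage of `S`, which has at most `s * |S|` vertices. Hence `H` is `D`-degenerate for
`D = ⌊d * s⌋`. Labelling the up-edges at each vertex injectively by `Fin D` makes every label
class a forest in which each vertex has at most one parent; 2-colouring it by the parity of the
depth splits `H` into `2 * D` star forests. For a single star forest, cutting each guest down to
a star centred at a preimage of the star's centre gives injective guests, still in `𝒢` by
heredity, and stars whose centres carry the same of the at most `s` preimage labels are
vertex-disjoint. So `2 * D * s ≤ 2 * d * s ^ 2` unions suffice.
-/

open Finset

section MaxAverageDegree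

variable {V : Type}

lemma card_adj_pairs_eq_two_mul_card_edgeSet (G : SimpleGraph V) [DecidableRel G.Adj]
    (T : Finset V) :
    #{p ∈ T ×ˢ T | G.Adj p.1 p.2} = 2 * Nat.card (G.induce (T : Set V)).edgeSet := by
  rw [Nat.card_eq_fintype_card, ← SimpleGraph.edgeFinset_card,
    ← SimpleGraph.dart_card_eq_twice_card_edges, ← Fintype.card_coe]
  refine Fintype.card_congr
    { toFun := fun p => ⟨(⟨p.1.1, ?_⟩, ⟨p.1.2, ?_⟩), (mem_filter.1 p.2).2⟩
      invFun := fun e => ⟨(e.fst, e.snd), ?_⟩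
      left_inv := fun _ => rfl
      right_inv := fun _ => rfl }
  · exact (mem_product.1 (mem_filter.1 p.2).1).1
  · exact (mem_product.1 (mem_filter.1 p.2).1).2
  · exact mem_filter.2 ⟨mem_product.2 ⟨e.fst.2, e.snd.2⟩, e.adj⟩

lemma card_adj_pairs_eq_sum_card_neighbors (G : SimpleGraph V) [DecidableRel G.Adj]
    (T : Finset V) :
    #{p ∈ T ×ˢ T | G.Adj p.1 p.2} = ∑ v ∈ T, #{w ∈ T | G.Adj v w} := by
  simp only [card_filter, sum_product]

variable [Fintype V] {G : SimpleGraph V} [DecidableRel G.Adj] {d : ℚ}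

lemma madLE_iff_card_adj_pairs_le :
    madLE G d ↔ ∀ T : Finset V, (#{p ∈ T ×ˢ T | G.Adj p.1 p.2} : ℚ) ≤ d * #T := by
  constructor
  · intro hG T
    rcases T.eq_empty_or_nonempty with rfl | hT
    · simp
    simpa [card_adj_pairs_eq_two_mul_card_edgeSet] using hG T (by simpa using hT)
  · intro hG s _
    classical
    have := hG s.toFinset
    rw [card_adj_pairs_eq_two_mul_card_edgeSet, Set.coe_toFinset] at this
    simpa [Nat.card_eq_card_toFinset] using this

lemma madLE.exists_card_neighbors_le (hG : madLE G d) {T : Finset V} (hT : T.Nonempty) :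
    ∃ v ∈ T, (#{w ∈ T | G.Adj v w} : ℚ) ≤ d := by
  apply exists_le_of_sum_le hT
  have := madLE_iff_card_adj_pairs_le.1 hG T
  rw [card_adj_pairs_eq_sum_card_neighbors] at this
  simpa [mul_comm] using this

theorem madLE.exists_rank_injOn [DecidableEq V] (hG : madLE G d) (S : Finset V) :
    ∃ rk : V → ℕ, Set.InjOn rk S ∧ ∀ v ∈ S, (#{w ∈ S | G.Adj v w ∧ rk v < rk w} : ℚ) ≤ d := by
  induction S using Finset.strongInduction with
  | H S ih =>
  rcases S.eq_empty_or_nonempty with rfl | hS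
  · exact ⟨fun _ => 0, by simp, by simp⟩
  obtain ⟨v₀, hv₀, hdeg⟩ := hG.exists_card_neighbors_le hS
  obtain ⟨rk, hinj, hup⟩ := ih (S.erase v₀) (erase_ssubset hv₀)
  refine ⟨fun w => if w = v₀ then 0 else rk w + 1, ?_, fun v hv => ?_⟩
  · intro a ha b hb hab
    by_cases h₁ : a = v₀ <;> by_cases h₂ : b = v₀
    · exact h₁.trans h₂.symm
    · simp [h₁, h₂] at hab
    · simp [h₁, h₂] at hab
    · simp only [h₁, h₂, if_false, add_left_inj] at hab
      exact hinj (mem_erase.2 ⟨h₁, ha⟩) (mem_erase.2 ⟨h₂, hb⟩) hab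
  by_cases h₁ : v = v₀
  · subst h₁
    refine le_trans (Nat.cast_le.2 (card_le_card fun w hw => ?_)) hdeg
    simp only [mem_filter] at hw ⊢
    exact ⟨hw.1, hw.2.1⟩
  · refine le_trans (Nat.cast_le.2 (card_le_card fun w hw => ?_)) (hup v (mem_erase.2 ⟨h₁, hv⟩))
    simp only [mem_filter, mem_erase, h₁, if_false] at hw ⊢
    split_ifs at hw with h₂
    · omega
    · exact ⟨⟨h₂, hw.1⟩, hw.2.1, by omega⟩

end MaxAverageDegree

theorem GraphClass.ContainsK2.one_le {𝒢 : GraphClass} (h2 : 𝒢.ContainsK2) {d : ℚ}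
    (hd : ∀ (W : Type) (G : SimpleGraph W), 𝒢 W G → madLE G d) : 1 ≤ d := by
  have := madLE_iff_card_adj_pairs_le.1 (hd _ _ h2) univ
  rw [show #{p ∈ univ ×ˢ univ | (⊤ : SimpleGraph (Fin 2)).Adj p.1 p.2} = 2 by decide] at this
  simpa using this

section StarDecomposition

variable {V : Type}

theorem exists_bool_coloring_of_functional {P : V → V → Prop}
    (hfun : ∀ {u v v'}, P u v → P u v' → v = v') (hwf : WellFounded fun v u => P u v) :
    ∃ χ : V → Bool, ∀ {u v}, P u v → χ u ≠ χ v := by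
  classical
  let χ : V → Bool :=
    hwf.fix fun u χ' => if h : ∃ v, P u v then !χ' h.choose h.choose_spec else false
  refine ⟨χ, fun {u v} huv => ?_⟩
  have hu : ∃ v, P u v := ⟨v, huv⟩
  have : χ u = !χ v := by
    rw [show χ u = _ from hwf.fix_eq _ u, dif_pos hu]
    exact congrArg (!χ ·) (hfun hu.choose_spec huv)
  simp [this]

/-- `IsLeaf k u v`: in the `k`-th star forest, `u` is a leaf of the star centred at `v`. -/
structure StarDecomposition (H : SimpleGraph V) (κ : Type) where
  IsLeaf : κ → V → V → Prop
  adj_of_isLeaf {k u v} : IsLeaf k u v → H.Adj u v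
  eq_of_isLeaf {k u v v'} : IsLeaf k u v → IsLeaf k u v' → v = v'
  not_isLeaf_of_isLeaf {k u v w} : IsLeaf k u v → ¬ IsLeaf k v w
  exists_isLeaf {u v} : H.Adj u v → ∃ k, IsLeaf k u v ∨ IsLeaf k v u

variable [Fintype V] {H : SimpleGraph V}

theorem nonempty_starDecomposition_of_rank [DecidableRel H.Adj] {rk : V → ℕ}
    (hrk : Function.Injective rk) {D : ℕ}
    (hup : ∀ v, #{w | H.Adj v w ∧ rk v < rk w} ≤ D) :
    Nonempty (StarDecomposition H (Fin D × Bool)) := by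
  classical
  have lab v : {w // H.Adj v w ∧ rk v < rk w} ↪ Fin D :=
    (Function.Embedding.nonempty_of_card_le (by simpa [Fintype.card_subtype] using hup v)).some
  let P (k : Fin D) (u v : V) : Prop := ∃ h : H.Adj u v ∧ rk u < rk v, lab u ⟨v, h⟩ = k
  have hfun {k u v v'} : P k u v → P k u v' → v = v' := by
    rintro ⟨h, rfl⟩ ⟨h', hk⟩
    exact congrArg Subtype.val ((lab u).injective hk.symm)
  have : IsTrans V fun v u => rk u < rk v := ⟨fun _ _ _ h₁ h₂ => h₂.trans h₁⟩
  have : Std.Irrefl fun v u : V => rk u < rk v := ⟨fun _ => lt_irrefl _⟩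
  have hwf (k) : WellFounded fun v u => P k u v :=
    Subrelation.wf (fun h => h.1.2) (Finite.wellFounded_of_trans_of_irrefl _)
  choose χ hχ using fun k => exists_bool_coloring_of_functional (P := P k) hfun (hwf k)
  refine ⟨{ IsLeaf := fun k u v => P k.1 u v ∧ χ k.1 u = k.2
            adj_of_isLeaf := fun h => h.1.1.1
            eq_of_isLeaf := fun h h' => hfun h.1 h'.1
            not_isLeaf_of_isLeaf := fun h h' => hχ _ h.1 (h.2.trans h'.2.symm)
            exists_isLeaf := fun {u v} huv => ?_ }⟩
  rcases lt_or_gt_of_ne (hrk.ne (H.ne_of_adj huv)) with h | h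
  · exact ⟨(lab u ⟨v, huv, h⟩, χ _ u), .inl ⟨⟨⟨huv, h⟩, rfl⟩, rfl⟩⟩
  · exact ⟨(lab v ⟨u, huv.symm, h⟩, χ _ v), .inr ⟨⟨⟨huv.symm, h⟩, rfl⟩, rfl⟩⟩

theorem madLE.nonempty_starDecomposition {d : ℚ} (hH : madLE H d) :
    Nonempty (StarDecomposition H (Fin ⌊d⌋₊ × Bool)) := by
  classical
  obtain ⟨rk, hinj, hup⟩ := hH.exists_rank_injOn univ
  exact nonempty_starDecomposition_of_rank (fun a b h => hinj (mem_univ a) (mem_univ b) h)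
    fun v => Nat.le_floor (by simpa using hup v (mem_univ v))

end StarDecomposition

namespace GraphCover

variable {V : Type} {H : SimpleGraph V} (c : GraphCover H)

theorem nonempty_setOf_isLocal [Finite V] {𝒢 : GraphClass} (h2 : 𝒢.ContainsK2) :
    {s | ∃ c : GraphCover H, c.InClass 𝒢 ∧ c.IsLocal s}.Nonempty := by
  let E := {e : V × V // H.Adj e.1 e.2}
  let edgeHom (e : E) : (⊤ : SimpleGraph (Fin 2)) →g H :=
    ⟨![e.1.1, e.1.2], fun {a b} hab => by fin_cases a <;> fin_cases b <;> simp_all [e.2, e.2.symm]⟩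
  exact ⟨Nat.card (Σ _ : E, Fin 2), ⟨E, inferInstance, fun _ => Fin 2, fun _ => inferInstance,
    fun _ => ⊤, edgeHom, fun u v huv => ⟨⟨(u, v), huv⟩, 0, 1, by simp, rfl, rfl⟩⟩,
    fun _ => h2, fun _ => Nat.card_le_card_of_injective Subtype.val Subtype.val_injective⟩

theorem madLE_of_isLocal [Fintype V] {d : ℚ} {s : ℕ} (hd : 0 ≤ d)
    (hmad : ∀ i, madLE (c.G i) d) (hloc : c.IsLocal s) : madLE H (d * s) := by
  classical
  have := c.finι
  have := c.finW
  let _ := Fintype.ofFinite c.ι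
  let _ : ∀ i, Fintype (c.W i) := fun i => Fintype.ofFinite _
  rw [madLE_iff_card_adj_pairs_le]
  intro S
  let T i : Finset (c.W i) := {a | c.φ i a ∈ S}
  have hlift : #{p ∈ S ×ˢ S | H.Adj p.1 p.2} ≤ ∑ i, #{q ∈ T i ×ˢ T i | (c.G i).Adj q.1 q.2} := by
    rw [← card_sigma]
    refine card_le_card_of_surjOn (fun q => (c.φ q.1 q.2.1, c.φ q.1 q.2.2)) ?_
    rintro ⟨u, v⟩ huv
    simp only [coe_filter, mem_product] at huv
    obtain ⟨i, a, b, hab, rfl, rfl⟩ := c.edge_surj huv.2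
    exact ⟨⟨i, (a, b)⟩, by simpa [T] using ⟨huv.1, hab⟩, rfl⟩
  have hpre : ∑ i, #(T i) ≤ s * #S := by
    rw [← card_sigma]
    refine card_le_mul_card_image_of_maps_to (f := fun p => c.φ p.1 p.2) (by simp [T]) s
      fun v _ => ?_
    calc #{p ∈ univ.sigma T | c.φ p.1 p.2 = v}
        ≤ #{p : Σ i, c.W i | c.φ p.1 p.2 = v} :=
          card_le_card (filter_subset_filter _ (subset_univ _))
      _ = c.mult v := by rw [mult, Nat.card_eq_fintype_card, Fintype.card_subtype]
      _ ≤ s := hloc v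
  calc (#{p ∈ S ×ˢ S | H.Adj p.1 p.2} : ℚ)
      ≤ ∑ i, (#{q ∈ T i ×ˢ T i | (c.G i).Adj q.1 q.2} : ℚ) := by exact_mod_cast hlift
    _ ≤ ∑ i, d * #(T i) := sum_le_sum fun i _ => madLE_iff_card_adj_pairs_le.1 (hmad i) (T i)
    _ = d * ∑ i, (#(T i) : ℚ) := by rw [mul_sum]
    _ ≤ d * (s * #S) := by gcongr; exact_mod_cast hpre
    _ = d * s * #S := by ring

section Induce

variable {ι' : Type} [Finite ι'] (j : ι' → c.ι) (S : ∀ t, Set (c.W (j t)))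
  (hS : ∀ ⦃u v⦄, H.Adj u v → ∃ t, ∃ a b : S t,
    (c.G (j t)).Adj a b ∧ c.φ (j t) a = u ∧ c.φ (j t) b = v)

def induce : GraphCover H where
  ι := ι'
  finι := inferInstance
  W t := S t
  finW t := have := c.finW (j t); inferInstance
  G t := (c.G (j t)).induce (S t)
  φ t := (c.φ (j t)).comp (SimpleGraph.Embedding.induce (S t)).toHom
  edge_surj := hS

lemma induce_inClass {𝒢 : GraphClass} (hher : 𝒢.Hereditary) (hc : c.InClass 𝒢) :
    (c.induce j S hS).InClass 𝒢 :=
  fun t => hher _ _ (hc (j t)) (S t)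

lemma induce_injective (hinj : ∀ t, Set.InjOn (c.φ (j t)) (S t)) :
    (c.induce j S hS).Injective :=
  fun t => (hinj t).injective

lemma range_induce_φ (t : ι') : Set.range ((c.induce j S hS).φ t) = c.φ (j t) '' S t := by
  change Set.range (c.φ (j t) ∘ Subtype.val) = _
  rw [Set.range_comp, Subtype.range_coe]

end Induce

lemma exists_lift {u v : V} (h : H.Adj u v) :
    ∃ p : Σ i, c.W i × c.W i, (c.G p.1).Adj p.2.1 p.2.2 ∧ c.φ p.1 p.2.1 = u ∧ c.φ p.1 p.2.2 = v :=
  let ⟨i, a, b, hab, ha, hb⟩ := c.edge_surj h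
  ⟨⟨i, a, b⟩, hab, ha, hb⟩

noncomputable def lift {u v : V} (h : H.Adj u v) : Σ i, c.W i × c.W i :=
  (c.exists_lift h).choose

lemma lift_spec {u v : V} (h : H.Adj u v) :
    (c.G (c.lift h).1).Adj (c.lift h).2.1 (c.lift h).2.2 ∧
      c.φ _ (c.lift h).2.1 = u ∧ c.φ _ (c.lift h).2.2 = v :=
  (c.exists_lift h).choose_spec

lemma lift_congr {u v u' v' : V} (h : H.Adj u v) (h' : H.Adj u' v') (hu : u = u')
    (hv : v = v') : c.lift h = c.lift h' := by
  subst hu hv; rfl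

lemma IsLocal.exists_label {s : ℕ} (hloc : c.IsLocal s) :
    ∃ label : (Σ i, c.W i) → Fin s,
      ∀ p q, c.φ p.1 p.2 = c.φ q.1 q.2 → label p = label q → p = q := by
  classical
  have := c.finι
  have := c.finW
  have e (v : V) : {p : Σ i, c.W i // c.φ p.1 p.2 = v} ↪ Fin s := by
    let _ := Fintype.ofFinite {p : Σ i, c.W i // c.φ p.1 p.2 = v}
    refine (Function.Embedding.nonempty_of_card_le ?_).some
    rw [Fintype.card_fin, ← Nat.card_eq_fintype_card]
    exact hloc v
  have he {q : Σ i, c.W i} {v : V} (h : c.φ q.1 q.2 = v) : e v ⟨q, h⟩ = e _ ⟨q, rfl⟩ := by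
    subst h; rfl
  refine ⟨fun p => e _ ⟨p, rfl⟩, fun p q hpq hl => ?_⟩
  dsimp only at hl
  rw [← he hpq.symm] at hl
  exact congrArg Subtype.val ((e _).injective hl)

section Star

variable {κ : Type} (D : StarDecomposition H κ)

/-- The star of `c.φ p` in the `k`-th forest, lifted into the guest of `p`: the centre `p.2`
and, for each leaf, the guest vertex of the edge that `lift` chose for it. It is empty when
`c.φ p` is itself a leaf of that forest, which keeps the images of stars with distinct centres
disjoint. -/
def starGuest (k : κ) (p : Σ i, c.W i) : Set (c.W p.1) :=
  {x | (∀ w, ¬ D.IsLeaf k (c.φ p.1 p.2) w) ∧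
    (x = p.2 ∨ ∃ h : D.IsLeaf k (c.φ p.1 x) (c.φ p.1 p.2),
      c.lift (D.adj_of_isLeaf h) = ⟨p.1, x, p.2⟩)}

lemma exists_adj_starGuest {k : κ} {u v : V} (h : D.IsLeaf k u v) :
    ∃ p, ∃ a b : c.starGuest D k p, (c.G p.1).Adj a b ∧ c.φ p.1 a = u ∧ c.φ p.1 b = v := by
  obtain ⟨hadj, hu, hv⟩ := c.lift_spec (D.adj_of_isLeaf h)
  have hcenter : ∀ w, ¬ D.IsLeaf k (c.φ _ (c.lift (D.adj_of_isLeaf h)).2.2) w := by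
    rw [hv]; exact fun w => D.not_isLeaf_of_isLeaf h
  have hleaf : D.IsLeaf k (c.φ _ (c.lift (D.adj_of_isLeaf h)).2.1)
      (c.φ _ (c.lift (D.adj_of_isLeaf h)).2.2) := by
    rw [hu, hv]; exact h
  exact ⟨⟨_, (c.lift (D.adj_of_isLeaf h)).2.2⟩,
    ⟨_, hcenter, .inr ⟨hleaf, c.lift_congr _ (D.adj_of_isLeaf h) hu hv⟩⟩,
    ⟨_, hcenter, .inl rfl⟩, hadj, hu, hv⟩

lemma injOn_starGuest (k : κ) (p : Σ i, c.W i) : Set.InjOn (c.φ p.1) (c.starGuest D k p) := by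
  rintro x ⟨-, rfl | ⟨hx, hlx⟩⟩ y ⟨-, rfl | ⟨hy, hly⟩⟩ hxy
  · rfl
  · exact absurd hxy.symm (H.ne_of_adj (D.adj_of_isLeaf hy))
  · exact absurd hxy (H.ne_of_adj (D.adj_of_isLeaf hx))
  · have := hlx.symm.trans ((c.lift_congr _ _ hxy rfl).trans hly)
    simpa using this

lemma disjoint_image_starGuest {k : κ} {p q : Σ i, c.W i} (hpq : c.φ p.1 p.2 ≠ c.φ q.1 q.2) :
    Disjoint (c.φ p.1 '' c.starGuest D k p) (c.φ q.1 '' c.starGuest D k q) := by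
  rw [Set.disjoint_left]
  rintro _ ⟨x, ⟨hp, rfl | ⟨hx, -⟩⟩, rfl⟩ ⟨y, ⟨hq, rfl | ⟨hy, -⟩⟩, hxy⟩
  · exact hpq hxy.symm
  · rw [hxy] at hy
    exact hp _ hy
  · rw [← hxy] at hx
    exact hq _ hx
  · rw [hxy] at hy
    exact hpq (D.eq_of_isLeaf hx hy)

end Star

theorem exists_injective_isUnion_of_starDecomposition {κ : Type} [Fintype κ]
    (D : StarDecomposition H κ) {𝒢 : GraphClass} (hher : 𝒢.Hereditary) (hc : c.InClass 𝒢)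
    {s : ℕ} (hloc : c.IsLocal s) :
    ∃ c' : GraphCover H, c'.InClass 𝒢 ∧ c'.Injective ∧ c'.IsUnion (Fintype.card κ * s) := by
  have := c.finι
  have := c.finW
  have hS ⦃u v : V⦄ (huv : H.Adj u v) : ∃ t : κ × (Σ i, c.W i), ∃ a b : c.starGuest D t.1 t.2,
      (c.G t.2.1).Adj a b ∧ c.φ t.2.1 a = u ∧ c.φ t.2.1 b = v := by
    obtain ⟨k, h | h⟩ := D.exists_isLeaf huv
    · obtain ⟨p, a, b, hab, ha, hb⟩ := c.exists_adj_starGuest D h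
      exact ⟨(k, p), a, b, hab, ha, hb⟩
    · obtain ⟨p, a, b, hab, ha, hb⟩ := c.exists_adj_starGuest D h
      exact ⟨(k, p), b, a, hab.symm, hb, ha⟩
  obtain ⟨label, hlabel⟩ := hloc.exists_label
  refine ⟨c.induce _ _ hS, c.induce_inClass _ _ _ hher hc,
    c.induce_injective _ _ _ fun t => c.injOn_starGuest D t.1 t.2,
    fun t => finProdFinEquiv (Fintype.equivFin κ t.1, label t.2), ?_⟩
  rintro ⟨k, p⟩ ⟨k', q⟩ hne heq
  obtain ⟨hk, hl⟩ := Prod.mk.inj (finProdFinEquiv.injective heq)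
  obtain rfl := (Fintype.equivFin κ).injective hk
  rw [range_induce_φ, range_induce_φ]
  exact c.disjoint_image_starGuest D fun h => hne (by rw [hlabel p q h hl])

end GraphCover

/-- for a hereditary guest class of maximum average degree at
most `d`, `c_u(𝒢,H) ≤ 2d · c_f(𝒢,H)²`. -/
theorem union_le_folded_sq_of_hereditary_sparse (𝒢 : GraphClass)
    (h2 : 𝒢.ContainsK2) (hher : 𝒢.Hereditary) (d : ℚ)
    (hd : ∀ (W : Type) (G : SimpleGraph W), 𝒢 W G → madLE G d)
    {V : Type} [Fintype V] (H : SimpleGraph V) :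
    (unionCN 𝒢 H : ℚ) ≤ 2 * d * (foldedCN 𝒢 H : ℚ) ^ 2 := by
  obtain ⟨c, hc, hloc⟩ := Nat.sInf_mem (GraphCover.nonempty_setOf_isLocal (H := H) h2)
  set s := foldedCN 𝒢 H
  have hd0 : 0 ≤ d := zero_le_one.trans (h2.one_le hd)
  obtain ⟨D⟩ := (c.madLE_of_isLocal hd0 (fun i => hd _ _ (hc i)) hloc).nonempty_starDecomposition
  obtain ⟨c', hc', hinj, hunion⟩ := c.exists_injective_isUnion_of_starDecomposition D hher hc hloc
  have hle : unionCN 𝒢 H ≤ Fintype.card (Fin ⌊d * s⌋₊ × Bool) * s :=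
    Nat.sInf_le ⟨c', hc', hinj, hunion⟩
  rw [Fintype.card_prod, Fintype.card_fin, Fintype.card_bool] at hle
  calc (unionCN 𝒢 H : ℚ) ≤ ⌊d * s⌋₊ * 2 * s := by exact_mod_cast hle
    _ ≤ d * s * 2 * s := by gcongr; exact Nat.floor_le (by positivity)
    _ = 2 * d * s ^ 2 := by ring
end

section
/- For the class B of all bipartite graphs and every graph H, the union B-covering number of H equals ⌈log₂ χ(H)⌉: the minimum number of bipartite subgraphs of H whose union is H is exactly ⌈log₂ χ(H)⌉. -/
open SimpleGraph

/-!
A colouring with `2 ^ t` colours is a colouring by bit vectors of length `t`. The edges of `H`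
whose endpoints differ in bit `i` form a bipartite subgraph `Bᵢ`, and `B₁, …, Bₜ` cover `H`.
Conversely, 2-colourings of bipartite graphs `B₁, …, Bₜ` covering `H` combine coordinatewise into
a proper colouring of `H` by bit vectors. So `H` is a union of `t` bipartite graphs iff
`χ(H) ≤ 2 ^ t`, i.e. iff `⌈log₂ χ(H)⌉ ≤ t`.
-/

namespace SimpleGraph

variable {V ι : Type*} {H : SimpleGraph V} {α : ι → Type*}

def Coloring.coordSubgraph (c : H.Coloring (∀ i, α i)) (i : ι) : SimpleGraph V :=
  H ⊓ (⊤ : SimpleGraph (α i)).comap (fun v => c v i)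

lemma Coloring.coordSubgraph_le (c : H.Coloring (∀ i, α i)) (i : ι) : c.coordSubgraph i ≤ H :=
  inf_le_left

def Coloring.coordSubgraphColoring (c : H.Coloring (∀ i, α i)) (i : ι) :
    (c.coordSubgraph i).Coloring (α i) :=
  Coloring.mk (fun v => c v i) fun h => h.2

lemma Coloring.le_iSup_coordSubgraph (c : H.Coloring (∀ i, α i)) :
    H ≤ ⨆ i, c.coordSubgraph i := by
  intro u v huv
  obtain ⟨i, hi⟩ := Function.ne_iff.mp (c.valid huv)
  exact iSup_adj.mpr ⟨i, huv, hi⟩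

def Coloring.piOfLeISup {B : ι → SimpleGraph V} (hH : H ≤ ⨆ i, B i)
    (f : ∀ i, (B i).Coloring (α i)) : H.Coloring (∀ i, α i) :=
  Coloring.mk (fun v i => f i v) fun huv hne => by
    obtain ⟨i, hi⟩ := iSup_adj.mp (hH huv)
    exact (f i).valid hi (congrFun hne i)

theorem colorable_pow_card_iff_exists_le_iSup [Fintype ι] {k : ℕ} :
    H.Colorable (k ^ Fintype.card ι) ↔
      ∃ B : ι → SimpleGraph V, (∀ i, B i ≤ H ∧ (B i).Colorable k) ∧ H ≤ ⨆ i, B i := by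
  classical
  constructor
  · intro hH
    let c : H.Coloring (ι → Fin k) := hH.toColoring (by simp)
    exact ⟨c.coordSubgraph, fun i => ⟨c.coordSubgraph_le i, by
      simpa using (c.coordSubgraphColoring i).colorable⟩, c.le_iSup_coordSubgraph⟩
  · rintro ⟨B, hB, hH⟩
    simpa using (Coloring.piOfLeISup hH fun i => (hB i).2.some).colorable

theorem colorable_iff_chromaticNumber_toNat_le [Finite V] {k : ℕ} :
    H.Colorable k ↔ H.chromaticNumber.toNat ≤ k := by
  have hfin : H.chromaticNumber ≠ ⊤ :=
    chromaticNumber_ne_top_iff_exists.mpr ⟨_, H.colorable_chromaticNumber_of_fintype⟩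
  rw [← chromaticNumber_le_iff_colorable]
  nth_rw 1 [← ENat.natCast_toNat hfin]
  exact Nat.cast_le

end SimpleGraph

/-- biparticity, Harary–Hsu–Miller: the minimum number of
bipartite subgraphs of `H` whose union is `H` equals `⌈log₂ χ(H)⌉`. -/
theorem biparticity_eq_clog_chromaticNumber {V : Type} [Fintype V]
    (H : SimpleGraph V) :
    sInf {t | ∃ B : Fin t → SimpleGraph V,
        (∀ i, B i ≤ H ∧ (B i).Colorable 2) ∧
        ∀ ⦃u v⦄, H.Adj u v → ∃ i, (B i).Adj u v} =
      Nat.clog 2 H.chromaticNumber.toNat := by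
  have hcover : ∀ t, (∃ B : Fin t → SimpleGraph V, (∀ i, B i ≤ H ∧ (B i).Colorable 2) ∧
      ∀ ⦃u v⦄, H.Adj u v → ∃ i, (B i).Adj u v) ↔ Nat.clog 2 H.chromaticNumber.toNat ≤ t := by
    intro t
    have hpow := colorable_pow_card_iff_exists_le_iSup (H := H) (ι := Fin t) (k := 2)
    rw [Fintype.card_fin] at hpow
    rw [Nat.clog_le_iff_le_pow one_lt_two, ← colorable_iff_chromaticNumber_toNat_le, hpow]
    simp only [le_iff_adj, iSup_adj]
  simp only [hcover]
  exact csInf_Ici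
end

section
/- For every directed graph D, the chromatic number of the shift graph of D is at least log₂ of the chromatic number of D: χ(shift(D)) ≥ log₂ χ(D). -/
open SimpleGraph

namespace shiftGraph

variable {V α : Type} {D : V → V → Prop}

theorem adj_of_snd_eq_fst {e f : {p : V × V // D p.1 p.2}} (hne : e ≠ f)
    (h : e.val.2 = f.val.1) : (shiftGraph D).Adj e f :=
  (fromRel_adj _ e f).mpr ⟨hne, Or.inl h⟩

def outColors (C : (shiftGraph D).Coloring α) (v : V) : Set α :=
  {a | ∃ w, ∃ h : D v w, C ⟨(v, w), h⟩ = a}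

/-- Every out-edge `vw` is adjacent to `uv` in the shift graph, so the colour of `uv`,
which is an out-colour of `u`, is not an out-colour of `v`. -/
theorem outColors_ne (C : (shiftGraph D).Coloring α) {u v : V} (huv : D u v) (hne : u ≠ v) :
    outColors C u ≠ outColors C v := by
  intro hS
  have hu : C ⟨(u, v), huv⟩ ∈ outColors C u := ⟨v, huv, rfl⟩
  obtain ⟨w, hvw, hC⟩ := hS ▸ hu
  have hadj : (shiftGraph D).Adj ⟨(u, v), huv⟩ ⟨(v, w), hvw⟩ :=
    adj_of_snd_eq_fst (fun h => hne (congrArg (·.val.1) h)) rfl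
  exact C.valid hadj hC.symm

def outColoring (C : (shiftGraph D).Coloring α) : (fromRel D).Coloring (Set α) :=
  Coloring.mk (outColors C) <| by
    rintro u v ⟨hne, huv | hvu⟩
    · exact outColors_ne C huv hne
    · exact (outColors_ne C hvu hne.symm).symm

theorem colorable_fromRel_of_colorable {n : ℕ} (h : (shiftGraph D).Colorable n) :
    (fromRel D).Colorable (2 ^ n) := by
  obtain ⟨C⟩ := h
  simpa [Fintype.card_set] using (outColoring C).colorable

end shiftGraph

/-- Lovász: for every directed graph `D`,
`χ(shift(D)) ≥ log₂ χ(D)`. -/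
theorem shiftGraph_chromatic_lower_bound {V : Type} [Fintype V]
    (D : V → V → Prop) :
    Nat.clog 2 (SimpleGraph.fromRel D).chromaticNumber.toNat ≤
      (shiftGraph D).chromaticNumber.toNat := by
  set c := (shiftGraph D).chromaticNumber.toNat
  have hD : (fromRel D).Colorable (2 ^ c) :=
    shiftGraph.colorable_fromRel_of_colorable (colorable_chromaticNumber_of_fintype _)
  rw [Nat.clog_le_iff_le_pow one_lt_two]
  exact ENat.toNat_le_of_le_natCast (chromaticNumber_le_iff_colorable.mpr hD)
end
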